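/- arXiv:math/0506596 — 5 statements merged into one kernel-verified Lean document; each statement's English description precedes it below -/
import Mathlib

section
/- There exists a constant C' depending only on C, β, m, m', k such that for every Borel measurable f : ℝ^d → ℝ with |f(y)| ≤ C(1+|y|^β) for all y, one has ∫_0^∞ |∫ f dμ_t^x − ∫ f dμ| dt ≤ C'(1+|x|^{m'}) for every x ∈ ℝ^d; in particular the map t ↦ |∫ f dμ_t^x − ∫ f dμ| is integrable on [0,∞) for every x. -/
/-!
Fix `t` and split `f` at the radius `R = (1 + t) ^ ((k + 1) / m)`. On the ball `‖y‖ ≤ R` the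
function is bounded by `2 C R ^ β`, so its contribution is at most `2 C R ^ β ‖μ_t^x - μ‖`; off
the ball `|f y| ≤ 2 C R ^ (β - m) ‖y‖ ^ m`, so the `m`-th moments control the tail. For this `R`
both terms are `O((1 + ‖x‖ ^ m') (1 + t) ^ (-a))` with `a = (k + 1) (1 - β / m) > 1`, which is
integrable on `(0, ∞)` with integral `1 / (a - 1)`.
-/

open MeasureTheory Set

/-- Total variation norm of the difference of two (finite) measures:
`‖μ - ν‖ = sup_E (μ E - ν E) + sup_E (ν E - μ E)` over measurable sets `E`. -/
noncomputable def tvNorm {α : Type*} [MeasurableSpace α] (μ ν : Measure α) : ℝ :=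
  (⨆ (E : Set α) (_ : MeasurableSet E), (μ E - ν E)).toReal +
  (⨆ (E : Set α) (_ : MeasurableSet E), (ν E - μ E)).toReal

namespace MeasureTheory.Measure

variable {α : Type*} [MeasurableSpace α] (μ ν : Measure α) [IsFiniteMeasure μ] [IsFiniteMeasure ν]

theorem add_sub_eq_add_sub_swap : μ + (ν - μ) = ν + (μ - ν) := by
  have h := sub_toSignedMeasure_eq_toSignedMeasure_sub (μ := μ) (ν := ν)
  rw [sub_eq_sub_iff_add_eq_add] at h
  rw [← toSignedMeasure_eq_toSignedMeasure_iff, toSignedMeasure_add, toSignedMeasure_add, h,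
    add_comm]

theorem real_sub_univ_le_toReal_iSup :
    (μ - ν).real univ ≤ (⨆ (E : Set α) (_ : MeasurableSet E), (μ E - ν E)).toReal := by
  obtain ⟨s, hs⟩ := exists_isHahnDecomposition μ ν
  have hsupp : (μ - ν) univ = μ sᶜ - ν sᶜ := by
    rw [← measure_add_measure_compl hs.measurableSet, sub_apply_eq_zero_of_isHahnDecomposition hs,
      zero_add, ← restrict_apply_univ, restrict_sub_eq_restrict_sub_restrict hs.measurableSet.compl,
      sub_apply MeasurableSet.univ hs.ge_on_compl, restrict_apply_univ, restrict_apply_univ]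
  refine ENNReal.toReal_mono ?_ ?_
  · refine ne_top_of_le_ne_top (measure_ne_top μ univ) (iSup₂_le fun E _ => ?_)
    exact tsub_le_self.trans (measure_mono (subset_univ E))
  · rw [hsupp]
    exact le_iSup₂ (f := fun E (_ : MeasurableSet E) => μ E - ν E) sᶜ hs.measurableSet.compl

theorem abs_integral_sub_le_mul_tvNorm {g : α → ℝ} (hg : Measurable g) {B : ℝ}
    (hB : ∀ y, |g y| ≤ B) (hB0 : 0 ≤ B) : |∫ y, g y ∂μ - ∫ y, g y ∂ν| ≤ B * tvNorm μ ν := by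
  have hint : ∀ (ρ : Measure α) [IsFiniteMeasure ρ], Integrable g ρ := fun ρ _ =>
    .of_bound hg.aestronglyMeasurable B (.of_forall hB)
  have hsplit : ∫ y, g y ∂μ - ∫ y, g y ∂ν = ∫ y, g y ∂(μ - ν) - ∫ y, g y ∂(ν - μ) := by
    have h := congrArg (fun ρ => ∫ y, g y ∂ρ) (add_sub_eq_add_sub_swap μ ν)
    simp only [integral_add_measure (hint _) (hint _)] at h
    linarith
  have hpart : ∀ (ρ : Measure α) [IsFiniteMeasure ρ], |∫ y, g y ∂ρ| ≤ B * ρ.real univ :=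
    fun ρ _ => norm_integral_le_of_norm_le_const (f := g) (.of_forall hB)
  calc |∫ y, g y ∂μ - ∫ y, g y ∂ν|
      ≤ |∫ y, g y ∂(μ - ν)| + |∫ y, g y ∂(ν - μ)| := hsplit ▸ abs_sub _ _
    _ ≤ B * (μ - ν).real univ + B * (ν - μ).real univ := add_le_add (hpart _) (hpart _)
    _ ≤ B * tvNorm μ ν := by
      rw [tvNorm, mul_add]
      gcongr
      exacts [real_sub_univ_le_toReal_iSup μ ν, real_sub_univ_le_toReal_iSup ν μ]

end MeasureTheory.Measure

theorem Real.one_add_rpow_le_two_mul_rpow {r R β : ℝ} (hr : 0 ≤ r) (hrR : r ≤ R) (hR : 1 ≤ R)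
    (hβ : 0 ≤ β) : 1 + r ^ β ≤ 2 * R ^ β := by
  have := Real.one_le_rpow hR hβ
  have := Real.rpow_le_rpow hr hrR hβ
  linarith

theorem Real.one_add_rpow_le_two_mul_rpow_sub_mul_rpow {r R β m : ℝ} (hR : 1 ≤ R) (hRr : R ≤ r)
    (hβ : 0 ≤ β) (hβm : β ≤ m) : 1 + r ^ β ≤ 2 * R ^ (β - m) * r ^ m := by
  have hr : 0 < r := by linarith
  calc 1 + r ^ β ≤ 2 * r ^ β := by linarith [Real.one_le_rpow (hR.trans hRr) hβ]
    _ = 2 * r ^ (β - m) * r ^ m := by rw [mul_assoc, ← Real.rpow_add hr, sub_add_cancel]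
    _ ≤ 2 * R ^ (β - m) * r ^ m := by
      have := Real.rpow_le_rpow_of_nonpos (by linarith) hRr (by linarith : β - m ≤ 0)
      gcongr

theorem Real.rpow_le_one_add_rpow_of_le {r m m' : ℝ} (hr : 0 ≤ r) (hm : 0 ≤ m) (hmm' : m ≤ m') :
    r ^ m ≤ 1 + r ^ m' := by
  rcases le_or_gt r 1 with hr1 | hr1
  · linarith [Real.rpow_le_one hr hr1 hm, Real.rpow_nonneg hr m']
  · linarith [Real.rpow_le_rpow_of_exponent_le hr1.le hmm']

section Moments

variable {α : Type*} [MeasurableSpace α] [NormedAddCommGroup α] {ν : Measure α} {h : α → ℝ}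
  {c m M : ℝ}

theorem lintegral_ofReal_abs_le_of_abs_le_mul_rpow_norm (hc : 0 ≤ c)
    (hh : ∀ y, |h y| ≤ c * ‖y‖ ^ m)
    (hmom : ∫⁻ y, ENNReal.ofReal (‖y‖ ^ m) ∂ν ≤ ENNReal.ofReal M) :
    ∫⁻ y, ENNReal.ofReal |h y| ∂ν ≤ ENNReal.ofReal (c * M) :=
  calc ∫⁻ y, ENNReal.ofReal |h y| ∂ν ≤ ∫⁻ y, ENNReal.ofReal c * ENNReal.ofReal (‖y‖ ^ m) ∂ν :=
        lintegral_mono fun y => (ENNReal.ofReal_le_ofReal (hh y)).trans_eq (ENNReal.ofReal_mul hc)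
    _ = ENNReal.ofReal c * ∫⁻ y, ENNReal.ofReal (‖y‖ ^ m) ∂ν :=
        lintegral_const_mul' _ _ ENNReal.ofReal_ne_top
    _ ≤ ENNReal.ofReal (c * M) := by
        rw [ENNReal.ofReal_mul hc]
        gcongr

theorem integrable_of_abs_le_mul_rpow_norm (hhm : AEStronglyMeasurable h ν) (hc : 0 ≤ c)
    (hh : ∀ y, |h y| ≤ c * ‖y‖ ^ m)
    (hmom : ∫⁻ y, ENNReal.ofReal (‖y‖ ^ m) ∂ν ≤ ENNReal.ofReal M) : Integrable h ν := by
  refine ⟨hhm, ?_⟩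
  simp only [HasFiniteIntegral, Real.enorm_eq_ofReal_abs]
  exact (lintegral_ofReal_abs_le_of_abs_le_mul_rpow_norm hc hh hmom).trans_lt ENNReal.ofReal_lt_top

theorem abs_integral_le_of_abs_le_mul_rpow_norm (hc : 0 ≤ c) (hM : 0 ≤ M)
    (hh : ∀ y, |h y| ≤ c * ‖y‖ ^ m)
    (hmom : ∫⁻ y, ENNReal.ofReal (‖y‖ ^ m) ∂ν ≤ ENNReal.ofReal M) : |∫ y, h y ∂ν| ≤ c * M :=
  (norm_integral_le_lintegral_norm h).trans <| ENNReal.toReal_le_of_le_ofReal (by positivity) <|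
    by simpa only [Real.norm_eq_abs] using
      lintegral_ofReal_abs_le_of_abs_le_mul_rpow_norm hc hh hmom

end Moments

section Splitting

variable {α : Type*} [MeasurableSpace α] [NormedAddCommGroup α] [OpensMeasurableSpace α]

theorem abs_integral_sub_le_of_abs_le_one_add_rpow (ν₁ ν₂ : Measure α) [IsFiniteMeasure ν₁]
    [IsFiniteMeasure ν₂] {C β m M₁ M₂ R : ℝ} (hC : 0 ≤ C) (hβ : 0 ≤ β) (hβm : β ≤ m)
    (hR : 1 ≤ R) (hM₁ : 0 ≤ M₁) (hM₂ : 0 ≤ M₂)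
    (hmom₁ : ∫⁻ y, ENNReal.ofReal (‖y‖ ^ m) ∂ν₁ ≤ ENNReal.ofReal M₁)
    (hmom₂ : ∫⁻ y, ENNReal.ofReal (‖y‖ ^ m) ∂ν₂ ≤ ENNReal.ofReal M₂)
    {f : α → ℝ} (hf : Measurable f) (hfb : ∀ y, |f y| ≤ C * (1 + ‖y‖ ^ β)) :
    |∫ y, f y ∂ν₁ - ∫ y, f y ∂ν₂|
      ≤ 2 * C * R ^ β * tvNorm ν₁ ν₂ + 2 * C * R ^ (β - m) * (M₁ + M₂) := by
  set S : Set α := {y | ‖y‖ ≤ R}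
  have hS : MeasurableSet S := measurableSet_le measurable_norm measurable_const
  have hbody : ∀ y, |S.indicator f y| ≤ 2 * C * R ^ β := by
    intro y
    by_cases hy : y ∈ S
    · rw [indicator_of_mem hy]
      exact (hfb y).trans <| (mul_le_mul_of_nonneg_left
        (Real.one_add_rpow_le_two_mul_rpow (norm_nonneg y) hy hR hβ) hC).trans_eq (by ring)
    · rw [indicator_of_notMem hy, abs_zero]
      positivity
  have htail : ∀ y, |Sᶜ.indicator f y| ≤ 2 * C * R ^ (β - m) * ‖y‖ ^ m := by
    intro y
    by_cases hy : y ∈ Sᶜ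
    · have hRy : R ≤ ‖y‖ := (not_le.mp (show ¬‖y‖ ≤ R from hy)).le
      rw [indicator_of_mem hy]
      exact (hfb y).trans <| (mul_le_mul_of_nonneg_left
        (Real.one_add_rpow_le_two_mul_rpow_sub_mul_rpow hR hRy hβ hβm) hC).trans_eq (by ring)
    · rw [indicator_of_notMem hy, abs_zero]
      positivity
  have hc : 0 ≤ 2 * C * R ^ (β - m) := by positivity
  have hsplit : ∀ (ν : Measure α) [IsFiniteMeasure ν] (M : ℝ),
      ∫⁻ y, ENNReal.ofReal (‖y‖ ^ m) ∂ν ≤ ENNReal.ofReal M →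
      ∫ y, f y ∂ν = ∫ y, S.indicator f y ∂ν + ∫ y, Sᶜ.indicator f y ∂ν := by
    intro ν _ M hmom
    rw [← integral_add (.of_bound (hf.indicator hS).aestronglyMeasurable _ (.of_forall hbody))
      (integrable_of_abs_le_mul_rpow_norm (hf.indicator hS.compl).aestronglyMeasurable hc htail
        hmom)]
    simp only [indicator_self_add_compl_apply]
  calc |∫ y, f y ∂ν₁ - ∫ y, f y ∂ν₂|
      = |(∫ y, S.indicator f y ∂ν₁ - ∫ y, S.indicator f y ∂ν₂)
          + (∫ y, Sᶜ.indicator f y ∂ν₁ - ∫ y, Sᶜ.indicator f y ∂ν₂)| := by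
        rw [hsplit ν₁ M₁ hmom₁, hsplit ν₂ M₂ hmom₂]; ring_nf
    _ ≤ |∫ y, S.indicator f y ∂ν₁ - ∫ y, S.indicator f y ∂ν₂|
          + (|∫ y, Sᶜ.indicator f y ∂ν₁| + |∫ y, Sᶜ.indicator f y ∂ν₂|) :=
        (abs_add_le _ _).trans (add_le_add_right (abs_sub _ _) _)
    _ ≤ 2 * C * R ^ β * tvNorm ν₁ ν₂
          + (2 * C * R ^ (β - m) * M₁ + 2 * C * R ^ (β - m) * M₂) := by
        gcongr
        · exact Measure.abs_integral_sub_le_mul_tvNorm ν₁ ν₂ (hf.indicator hS) hbody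
            (by positivity)
        · exact abs_integral_le_of_abs_le_mul_rpow_norm hc hM₁ htail hmom₁
        · exact abs_integral_le_of_abs_le_mul_rpow_norm hc hM₂ htail hmom₂
    _ = _ := by ring

end Splitting

theorem abs_integral_sub_le_of_tvNorm_le {α : Type*} [MeasurableSpace α] [NormedAddCommGroup α]
    [OpensMeasurableSpace α] (ν μ : Measure α) [IsFiniteMeasure ν] [IsFiniteMeasure μ]
    {C β m m' k t : ℝ} (x : α) (hC : 0 ≤ C) (hβ : 0 ≤ β) (hβm : β < m) (hmm' : m ≤ m')
    (hk : 0 ≤ k + 1) (ht : 0 ≤ t)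
    (hmomν : ∫⁻ y, ENNReal.ofReal (‖y‖ ^ m) ∂ν ≤ ENNReal.ofReal (C * (1 + ‖x‖ ^ m')))
    (hmomμ : ∫⁻ y, ENNReal.ofReal (‖y‖ ^ m) ∂μ ≤ ENNReal.ofReal C)
    (htv : tvNorm ν μ ≤ C * (1 + ‖x‖ ^ m) * (1 + t) ^ (-(k + 1)))
    {f : α → ℝ} (hf : Measurable f) (hfb : ∀ y, |f y| ≤ C * (1 + ‖y‖ ^ β)) :
    |∫ y, f y ∂ν - ∫ y, f y ∂μ|
      ≤ 8 * C ^ 2 * (1 + ‖x‖ ^ m') * (1 + t) ^ (-((k + 1) * (1 - β / m))) := by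
  have hm : 0 < m := hβ.trans_lt hβm
  have hu : 0 < 1 + t := by linarith
  set R := (1 + t) ^ ((k + 1) / m)
  have hR : 1 ≤ R := Real.one_le_rpow (by linarith) (div_nonneg hk hm.le)
  have hbody : R ^ β * (1 + t) ^ (-(k + 1)) = (1 + t) ^ (-((k + 1) * (1 - β / m))) := by
    rw [← Real.rpow_mul hu.le, ← Real.rpow_add hu]
    congr 1
    field_simp
    ring
  have htail : R ^ (β - m) = (1 + t) ^ (-((k + 1) * (1 - β / m))) := by
    rw [← Real.rpow_mul hu.le]
    congr 1
    field_simp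
    ring
  have hx : ‖x‖ ^ m ≤ 1 + ‖x‖ ^ m' := Real.rpow_le_one_add_rpow_of_le (norm_nonneg x) hm.le hmm'
  have hx' : 0 ≤ ‖x‖ ^ m' := Real.rpow_nonneg (norm_nonneg x) m'
  calc |∫ y, f y ∂ν - ∫ y, f y ∂μ|
      ≤ 2 * C * R ^ β * tvNorm ν μ + 2 * C * R ^ (β - m) * (C * (1 + ‖x‖ ^ m') + C) :=
        abs_integral_sub_le_of_abs_le_one_add_rpow ν μ hC hβ hβm.le hR (by positivity) hC
          hmomν hmomμ hf hfb
    _ ≤ 2 * C * R ^ β * (C * (1 + ‖x‖ ^ m) * (1 + t) ^ (-(k + 1)))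
          + 2 * C * R ^ (β - m) * (C * (1 + ‖x‖ ^ m') + C) := by gcongr
    _ = 2 * C ^ 2 * ((1 + ‖x‖ ^ m) + (2 + ‖x‖ ^ m'))
          * (1 + t) ^ (-((k + 1) * (1 - β / m))) := by
        rw [← htail] at hbody ⊢
        linear_combination 2 * C ^ 2 * (1 + ‖x‖ ^ m) * hbody
    _ ≤ 8 * C ^ 2 * (1 + ‖x‖ ^ m') * (1 + t) ^ (-((k + 1) * (1 - β / m))) := by
        have := Real.rpow_nonneg hu.le (-((k + 1) * (1 - β / m)))
        have := sq_nonneg C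
        gcongr ?_ * _
        nlinarith

theorem hasDerivAt_one_add_rpow_div {p t : ℝ} (hp : p ≠ 0) (ht : 0 ≤ t) :
    HasDerivAt (fun s => (1 + s) ^ p / p) ((1 + t) ^ (p - 1)) t := by
  refine ((((hasDerivAt_id' t).const_add 1).rpow_const (p := p) (Or.inl (by positivity))).div_const
    p).congr_deriv ?_
  field_simp

theorem tendsto_one_add_rpow_div_atTop {p : ℝ} (hp : p < 0) :
    Filter.Tendsto (fun s : ℝ => (1 + s) ^ p / p) Filter.atTop (nhds 0) := by
  have := (tendsto_rpow_neg_atTop (y := -p) (by linarith)).comp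
    (Filter.tendsto_atTop_add_const_left _ 1 Filter.tendsto_id)
  simpa using this.div_const p

theorem hasDerivAt_one_add_rpow_sub_div {a t : ℝ} (ha : 1 < a) (ht : 0 ≤ t) :
    HasDerivAt (fun s => (1 + s) ^ (1 - a) / (1 - a)) ((1 + t) ^ (-a)) t := by
  simpa only [sub_sub_cancel_left] using hasDerivAt_one_add_rpow_div (by linarith : 1 - a ≠ 0) ht

theorem integrableOn_Ioi_one_add_rpow_neg {a : ℝ} (ha : 1 < a) :
    IntegrableOn (fun t : ℝ => (1 + t) ^ (-a)) (Ioi 0) :=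
  integrableOn_Ioi_deriv_of_nonneg' (fun t ht => hasDerivAt_one_add_rpow_sub_div ha ht)
    (fun t ht => Real.rpow_nonneg (by linarith [mem_Ioi.mp ht]) _)
    (tendsto_one_add_rpow_div_atTop (by linarith))

theorem integral_Ioi_one_add_rpow_neg {a : ℝ} (ha : 1 < a) :
    ∫ t in Ioi (0 : ℝ), (1 + t) ^ (-a) = 1 / (a - 1) := by
  rw [integral_Ioi_of_hasDerivAt_of_tendsto' (fun t ht => hasDerivAt_one_add_rpow_sub_div ha ht)
    (integrableOn_Ioi_one_add_rpow_neg ha) (tendsto_one_add_rpow_div_atTop (by linarith)),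
    add_zero, Real.one_rpow, zero_sub, ← div_neg, neg_sub]

theorem stronglyMeasurable_integral_of_measurable_apply {β α : Type*} [MeasurableSpace β]
    [MeasurableSpace α] {P : β → Measure α} (hP : ∀ E, MeasurableSet E → Measurable fun b => P b E)
    {f : α → ℝ} (hf : StronglyMeasurable f) : StronglyMeasurable fun b => ∫ y, f y ∂P b :=
  hf.integral_kernel (κ := ⟨P, Measure.measurable_of_measurable_coe P hP⟩)

theorem stmt0_general
    (d : ℕ)
    (C β m m' k : ℝ) (hC : 1 ≤ C) (hβ : 0 ≤ β) (hβm : β < m) (hmm' : m ≤ m')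
    (hk : 0 < k) (hk1 : 1 < (k + 1) * (1 - β / m)) :
    ∃ C' : ℝ,
      ∀ (P : ℝ → EuclideanSpace ℝ (Fin d) → Measure (EuclideanSpace ℝ (Fin d)))
        (μ : Measure (EuclideanSpace ℝ (Fin d))),
        (∀ t x, 0 ≤ t → IsProbabilityMeasure (P t x)) →
        IsProbabilityMeasure μ →
        (∀ E : Set (EuclideanSpace ℝ (Fin d)), MeasurableSet E →
          Measurable (fun p : ℝ × EuclideanSpace ℝ (Fin d) => P p.1 p.2 E)) →
        (∀ t x, 0 ≤ t →
          ∫⁻ y, ENNReal.ofReal (‖y‖ ^ m) ∂(P t x) ≤ ENNReal.ofReal (C * (1 + ‖x‖ ^ m'))) →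
        (∫⁻ y, ENNReal.ofReal (‖y‖ ^ m) ∂μ ≤ ENNReal.ofReal C) →
        (∀ t x, 0 ≤ t →
          tvNorm (P t x) μ ≤ C * (1 + ‖x‖ ^ m) * (1 + t) ^ (-(k + 1))) →
        ∀ f : EuclideanSpace ℝ (Fin d) → ℝ, Measurable f →
          (∀ y, |f y| ≤ C * (1 + ‖y‖ ^ β)) →
          ∀ x,
            IntegrableOn (fun t => |(∫ y, f y ∂(P t x)) - ∫ y, f y ∂μ|) (Ioi (0 : ℝ)) ∧
            (∫ t in Ioi (0 : ℝ), |(∫ y, f y ∂(P t x)) - ∫ y, f y ∂μ|)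
              ≤ C' * (1 + ‖x‖ ^ m') := by
  refine ⟨8 * C ^ 2 / ((k + 1) * (1 - β / m) - 1), ?_⟩
  intro P μ hP hμ hmeasP hmomP hmomμ hTV f hf hfb x
  set a := (k + 1) * (1 - β / m)
  set K := 8 * C ^ 2 * (1 + ‖x‖ ^ m')
  have hbound : ∀ t ∈ Ioi (0 : ℝ), |(∫ y, f y ∂(P t x)) - ∫ y, f y ∂μ| ≤ K * (1 + t) ^ (-a) :=
    fun t ht =>
      have := hP t x (le_of_lt ht)
      abs_integral_sub_le_of_tvNorm_le _ _ x (by linarith) hβ hβm hmm' (by linarith) (le_of_lt ht)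
        (hmomP t x (le_of_lt ht)) hmomμ (hTV t x (le_of_lt ht)) hf hfb
  have hmeas : StronglyMeasurable fun t => ∫ y, f y ∂(P t x) :=
    stronglyMeasurable_integral_of_measurable_apply
      (fun E hE => (hmeasP E hE).comp (measurable_id.prodMk measurable_const)) hf.stronglyMeasurable
  have hdom := (integrableOn_Ioi_one_add_rpow_neg hk1).const_mul K
  have hint : IntegrableOn (fun t => |(∫ y, f y ∂(P t x)) - ∫ y, f y ∂μ|) (Ioi 0) :=
    hdom.mono' (hmeas.measurable.sub_const _).abs.aestronglyMeasurable <|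
      ae_restrict_of_forall_mem measurableSet_Ioi fun t ht => (abs_abs _).trans_le (hbound t ht)
  refine ⟨hint, ?_⟩
  calc (∫ t in Ioi (0 : ℝ), |(∫ y, f y ∂(P t x)) - ∫ y, f y ∂μ|)
      ≤ ∫ t in Ioi (0 : ℝ), K * (1 + t) ^ (-a) :=
        setIntegral_mono_on hint hdom measurableSet_Ioi hbound
    _ = 8 * C ^ 2 / (a - 1) * (1 + ‖x‖ ^ m') := by
      rw [integral_const_mul, integral_Ioi_one_add_rpow_neg hk1]; ring

/-- there is a constant `C'` depending only on `C, β, m, m', k` such that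
for any family `(μ_t^x)` and `μ` satisfying the moment and mixing bounds, and any Borel `f`
with `|f(y)| ≤ C(1+|y|^β)`, one has `∫_0^∞ |∫ f dμ_t^x − ∫ f dμ| dt ≤ C'(1+|x|^{m'})`;
in particular `t ↦ |∫ f dμ_t^x − ∫ f dμ|` is integrable on `[0,∞)`. -/
theorem stmt0
    (d : ℕ) (hd : 1 ≤ d)
    (C β m m' k : ℝ) (hC : 1 ≤ C) (hβ : 0 ≤ β) (hβm : β < m) (hmm' : m ≤ m')
    (hk : 0 < k) (hk1 : 1 < (k + 1) * (1 - β / m)) :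
    ∃ C' : ℝ,
      ∀ (P : ℝ → EuclideanSpace ℝ (Fin d) → Measure (EuclideanSpace ℝ (Fin d)))
        (μ : Measure (EuclideanSpace ℝ (Fin d))),
        (∀ t x, 0 ≤ t → IsProbabilityMeasure (P t x)) →
        IsProbabilityMeasure μ →
        (∀ E : Set (EuclideanSpace ℝ (Fin d)), MeasurableSet E →
          Measurable (fun p : ℝ × EuclideanSpace ℝ (Fin d) => P p.1 p.2 E)) →
        (∀ t x, 0 ≤ t →
          ∫⁻ y, ENNReal.ofReal (‖y‖ ^ m) ∂(P t x) ≤ ENNReal.ofReal (C * (1 + ‖x‖ ^ m'))) →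
        (∫⁻ y, ENNReal.ofReal (‖y‖ ^ m) ∂μ ≤ ENNReal.ofReal C) →
        (∀ t x, 0 ≤ t →
          tvNorm (P t x) μ ≤ C * (1 + ‖x‖ ^ m) * (1 + t) ^ (-(k + 1))) →
        ∀ f : EuclideanSpace ℝ (Fin d) → ℝ, Measurable f →
          (∀ y, |f y| ≤ C * (1 + ‖y‖ ^ β)) →
          ∀ x,
            IntegrableOn (fun t => |(∫ y, f y ∂(P t x)) - ∫ y, f y ∂μ|) (Ioi (0 : ℝ)) ∧
            (∫ t in Ioi (0 : ℝ), |(∫ y, f y ∂(P t x)) - ∫ y, f y ∂μ|)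
              ≤ C' * (1 + ‖x‖ ^ m') :=
  stmt0_general d C β m m' k hC hβ hβm hmm' hk hk1
end

section
/- For every m > β + 4 there exists a constant C_m, depending only on m, β, C_f and the constants in (P1)–(P3), such that ũ(x) ≤ C_m(1+|x|^m) for all x ∈ ℝ^d. In particular u is well defined (the defining integral converges absolutely for every x), |u(x)| ≤ ũ(x) ≤ C_m(1+|x|^m), and u is μ-integrable. -/
/-!
Since `∫ f dμ = 0`, we have `∫ f dμ_t^x = ∫ f d(μ_t^x - μ)`; split `f` at the radius
`R = (1 + t)^a`. On `|y| ≤ R` the function is bounded by `C_f (1 + R^β)`, so (P3) with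
`k = a (β + 1)` bounds that part by `(1 + |x|^m) (1 + t)^(-1-a)`. On `|y| > R` we have
`|f y| ≤ 2 C_f R^(-γ) |y|^(β+γ)`, so the moments (P1), (P2) bound the tail by
`(1 + |x|^m) (1 + t)^(-aγ)`. For `m > β + 4` one can take `γ = (m - β)/2` and `a` with
`aγ > 1` and `2 a (β + 1) + 2 < m`, so both bounds are integrable in `t`.
-/

open MeasureTheory Set

lemma tvNorm_nonneg {α : Type*} [MeasurableSpace α] (ν₁ ν₂ : Measure α) :
    0 ≤ tvNorm ν₁ ν₂ :=
  add_nonneg ENNReal.toReal_nonneg ENNReal.toReal_nonneg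

section TotalVariation

variable {α : Type*} [MeasurableSpace α] {ν₁ ν₂ : Measure α} [IsFiniteMeasure ν₁]
  [IsFiniteMeasure ν₂]

/-- By the layer-cake formula both integrals are integrals over `t ∈ (0, B]` of `ν {t ≤ g}`,
and `ν₁ {t ≤ g} - ν₂ {t ≤ g}` is at most the supremum. -/
lemma integral_sub_integral_le_mul_iSup_sub {g : α → ℝ} (hg : Measurable g) {B : ℝ}
    (hB : 0 ≤ B) (hg0 : ∀ a, 0 ≤ g a) (hgB : ∀ a, g a ≤ B) :
    ∫ a, g a ∂ν₁ - ∫ a, g a ∂ν₂ ≤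
      B * (⨆ (E : Set α) (_ : MeasurableSet E), (ν₁ E - ν₂ E)).toReal := by
  set δ := ⨆ (E : Set α) (_ : MeasurableSet E), (ν₁ E - ν₂ E)
  have hδ : δ ≠ ⊤ := ne_top_of_le_ne_top (measure_ne_top ν₁ univ)
    (iSup₂_le fun E _ => tsub_le_self.trans (measure_mono (subset_univ E)))
  have hlevel : ∀ t, ν₁.real {a | t ≤ g a} ≤ ν₂.real {a | t ≤ g a} + δ.toReal := by
    intro t
    rw [measureReal_def, measureReal_def, ← ENNReal.toReal_add (measure_ne_top _ _) hδ]
    refine ENNReal.toReal_mono (ENNReal.add_ne_top.2 ⟨measure_ne_top _ _, hδ⟩) ?_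
    exact tsub_le_iff_left.1 (le_iSup₂ (f := fun E (_ : MeasurableSet E) => ν₁ E - ν₂ E) _
      (measurableSet_le measurable_const hg))
  have hlayer : ∀ (ν : Measure α) [IsFiniteMeasure ν],
      ∫ a, g a ∂ν = ∫ t in Ioc 0 B, ν.real {a | t ≤ g a} := fun ν _ =>
    (Integrable.of_bound hg.aestronglyMeasurable B (ae_of_all _ fun a => by
      rw [Real.norm_of_nonneg (hg0 a)]; exact hgB a)).integral_eq_integral_Ioc_meas_le
      (ae_of_all _ hg0) (ae_of_all _ hgB)
  have hint : ∀ (ν : Measure α) [IsFiniteMeasure ν],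
      IntegrableOn (fun t => ν.real {a | t ≤ g a}) (Ioc 0 B) := by
    intro ν _
    have hanti : Antitone fun t => ν.real {a | t ≤ g a} := fun s t hst =>
      measureReal_mono fun a (ha : t ≤ g a) => hst.trans ha
    refine Measure.integrableOn_of_bounded (M := ν.real univ) measure_Ioc_lt_top.ne
      hanti.measurable.aestronglyMeasurable (ae_of_all _ fun t => ?_)
    rw [Real.norm_of_nonneg measureReal_nonneg]
    exact measureReal_mono (subset_univ _)
  have hδint : IntegrableOn (fun _ => δ.toReal) (Ioc (0 : ℝ) B) :=
    integrableOn_const measure_Ioc_lt_top.ne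
  calc ∫ a, g a ∂ν₁ - ∫ a, g a ∂ν₂
      ≤ (∫ t in Ioc 0 B, (ν₂.real {a | t ≤ g a} + δ.toReal)) -
          ∫ t in Ioc 0 B, ν₂.real {a | t ≤ g a} := by
        rw [hlayer ν₁, hlayer ν₂]
        exact sub_le_sub_right (setIntegral_mono_on (hint ν₁) ((hint ν₂).add hδint)
          measurableSet_Ioc fun t _ => hlevel t) _
    _ = B * δ.toReal := by
        rw [integral_add (hint ν₂) hδint, setIntegral_const, Real.volume_real_Ioc_of_le hB,
          smul_eq_mul]
        ring

lemma abs_integral_sub_integral_le_mul_tvNorm {g : α → ℝ} (hg : Measurable g) {M : ℝ}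
    (hM : 0 ≤ M) (hgM : ∀ a, |g a| ≤ M) :
    |∫ a, g a ∂ν₁ - ∫ a, g a ∂ν₂| ≤ M * tvNorm ν₁ ν₂ := by
  have hpos : Measurable fun a => max (g a) 0 := hg.max measurable_const
  have hneg : Measurable fun a => max (-g a) 0 := hg.neg.max measurable_const
  have hpos0 : ∀ a, 0 ≤ max (g a) 0 := fun a => le_max_right _ _
  have hneg0 : ∀ a, 0 ≤ max (-g a) 0 := fun a => le_max_right _ _
  have hposM : ∀ a, max (g a) 0 ≤ M := fun a => max_le (abs_le.1 (hgM a)).2 hM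
  have hnegM : ∀ a, max (-g a) 0 ≤ M :=
    fun a => max_le (by linarith [(abs_le.1 (hgM a)).1]) hM
  have hsplit : ∀ (ν : Measure α) [IsFiniteMeasure ν],
      ∫ a, g a ∂ν = ∫ a, max (g a) 0 ∂ν - ∫ a, max (-g a) 0 ∂ν := by
    intro ν _
    have hbdd : ∀ h : α → ℝ, Measurable h → (∀ a, 0 ≤ h a) → (∀ a, h a ≤ M) →
        Integrable h ν := fun h hh h0 hM => Integrable.of_bound hh.aestronglyMeasurable M
      (ae_of_all _ fun a => by rw [Real.norm_of_nonneg (h0 a)]; exact hM a)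
    rw [← integral_sub (hbdd _ hpos hpos0 hposM) (hbdd _ hneg hneg0 hnegM)]
    simp only [max_zero_sub_max_neg_zero_eq_self]
  have h₁ := integral_sub_integral_le_mul_iSup_sub (ν₁ := ν₁) (ν₂ := ν₂) hpos hM hpos0 hposM
  have h₂ := integral_sub_integral_le_mul_iSup_sub (ν₁ := ν₂) (ν₂ := ν₁) hpos hM hpos0 hposM
  have h₃ := integral_sub_integral_le_mul_iSup_sub (ν₁ := ν₁) (ν₂ := ν₂) hneg hM hneg0 hnegM
  have h₄ := integral_sub_integral_le_mul_iSup_sub (ν₁ := ν₂) (ν₂ := ν₁) hneg hM hneg0 hnegM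
  rw [hsplit ν₁, hsplit ν₂, tvNorm, abs_le]
  constructor <;> linarith

end TotalVariation

lemma one_add_rpow_le_mul_rpow_add {β γ R r : ℝ} (hβ : 0 ≤ β) (hγ : 0 ≤ γ) (hR : 1 ≤ R)
    (hRr : R ≤ r) : 1 + r ^ β ≤ 2 * R ^ (-γ) * r ^ (β + γ) := by
  have hr : 0 < r := by linarith
  have hrβ : 1 ≤ r ^ β := Real.one_le_rpow (hR.trans hRr) hβ
  have hratio : 1 ≤ R ^ (-γ) * r ^ γ := by
    rw [Real.rpow_neg (by linarith), ← div_eq_inv_mul, ← Real.div_rpow hr.le (by linarith)]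
    exact Real.one_le_rpow ((one_le_div (by linarith)).2 hRr) hγ
  calc 1 + r ^ β ≤ 2 * r ^ β * 1 := by linarith
    _ ≤ 2 * r ^ β * (R ^ (-γ) * r ^ γ) := by gcongr
    _ = 2 * R ^ (-γ) * r ^ (β + γ) := by rw [Real.rpow_add hr]; ring

section Truncation

variable {E : Type*} [NormedAddCommGroup E] [MeasurableSpace E] [OpensMeasurableSpace E]
  {ν μ : Measure E} [IsFiniteMeasure ν] [IsFiniteMeasure μ] {f : E → ℝ} {β γ Cf : ℝ}

lemma abs_integral_le_of_truncation (hf : Measurable f) (hβ : 0 ≤ β) (hγ : 0 ≤ γ) {R : ℝ}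
    (hR : 1 ≤ R) (hfb : ∀ y, |f y| ≤ Cf * (1 + ‖y‖ ^ β)) (hfμ : ∫ y, f y ∂μ = 0)
    (hν : Integrable (fun y => ‖y‖ ^ (β + γ)) ν) (hμ : Integrable (fun y => ‖y‖ ^ (β + γ)) μ) :
    |∫ y, f y ∂ν| ≤ Cf * (1 + R ^ β) * tvNorm ν μ +
      2 * Cf * R ^ (-γ) * (∫ y, ‖y‖ ^ (β + γ) ∂ν + ∫ y, ‖y‖ ^ (β + γ) ∂μ) := by
  have hCf : 0 ≤ Cf :=
    nonneg_of_mul_nonneg_left ((abs_nonneg _).trans (hfb 0)) (by positivity)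
  set S := {y : E | ‖y‖ ≤ R}
  have hS : MeasurableSet S := measurableSet_le measurable_norm measurable_const
  have hin : ∀ y, |S.indicator f y| ≤ Cf * (1 + R ^ β) := by
    intro y
    by_cases hy : y ∈ S
    · rw [indicator_of_mem hy]
      exact (hfb y).trans (by gcongr; exact hy)
    · rw [indicator_of_notMem hy, abs_zero]; positivity
  have hout : ∀ y, |Sᶜ.indicator f y| ≤ 2 * Cf * R ^ (-γ) * ‖y‖ ^ (β + γ) := by
    intro y
    by_cases hy : y ∈ S
    · rw [indicator_of_notMem (notMem_compl_iff.2 hy), abs_zero]; positivity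
    · rw [indicator_of_mem hy]
      calc |f y| ≤ Cf * (1 + ‖y‖ ^ β) := hfb y
        _ ≤ Cf * (2 * R ^ (-γ) * ‖y‖ ^ (β + γ)) := by
          gcongr; exact one_add_rpow_le_mul_rpow_add hβ hγ hR (le_of_lt (not_le.1 hy))
        _ = 2 * Cf * R ^ (-γ) * ‖y‖ ^ (β + γ) := by ring
  have htail : ∀ ρ : Measure E, Integrable (fun y => ‖y‖ ^ (β + γ)) ρ →
      Integrable (Sᶜ.indicator f) ρ ∧
        |∫ y, Sᶜ.indicator f y ∂ρ| ≤ 2 * Cf * R ^ (-γ) * ∫ y, ‖y‖ ^ (β + γ) ∂ρ := by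
    intro ρ hρ
    have hdom := hρ.const_mul (2 * Cf * R ^ (-γ))
    refine ⟨hdom.mono' (hf.indicator hS.compl).aestronglyMeasurable (ae_of_all _ hout), ?_⟩
    rw [← integral_const_mul]
    exact abs_integral_le_integral_abs.trans (integral_mono_of_nonneg
      (ae_of_all _ fun y => abs_nonneg _) hdom (ae_of_all _ hout))
  have hsplit : ∀ (ρ : Measure E) [IsFiniteMeasure ρ], Integrable (Sᶜ.indicator f) ρ →
      ∫ y, f y ∂ρ = ∫ y, S.indicator f y ∂ρ + ∫ y, Sᶜ.indicator f y ∂ρ := by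
    intro ρ _ hρ
    rw [← integral_add' _ hρ, indicator_self_add_compl]
    exact Integrable.of_bound (hf.indicator hS).aestronglyMeasurable _ (ae_of_all _ hin)
  obtain ⟨hνi, hνb⟩ := htail ν hν
  obtain ⟨hμi, hμb⟩ := htail μ hμ
  have hbulk := abs_integral_sub_integral_le_mul_tvNorm (ν₁ := ν) (ν₂ := μ)
    (hf.indicator hS) (by positivity) hin
  rw [hsplit μ hμi] at hfμ
  calc |∫ y, f y ∂ν|
      = |(∫ y, S.indicator f y ∂ν - ∫ y, S.indicator f y ∂μ) + ∫ y, Sᶜ.indicator f y ∂ν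
          - ∫ y, Sᶜ.indicator f y ∂μ| := by rw [hsplit ν hνi]; congr 1; linarith
    _ ≤ |∫ y, S.indicator f y ∂ν - ∫ y, S.indicator f y ∂μ| + |∫ y, Sᶜ.indicator f y ∂ν|
          + |∫ y, Sᶜ.indicator f y ∂μ| :=
        (abs_sub _ _).trans (by gcongr; exact abs_add_le _ _)
    _ ≤ _ := by linarith

lemma abs_integral_le_of_tvNorm_le_of_moment_le (hf : Measurable f) (hβ : 0 ≤ β)
    (hγ : 0 ≤ γ) {a t X C₁ C₃ : ℝ} (ha : 0 ≤ a) (ht : 0 ≤ t) (hX : 1 ≤ X)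
    (hfb : ∀ y, |f y| ≤ Cf * (1 + ‖y‖ ^ β)) (hfμ : ∫ y, f y ∂μ = 0)
    (hν : Integrable (fun y => ‖y‖ ^ (β + γ)) ν) (hμ : Integrable (fun y => ‖y‖ ^ (β + γ)) μ)
    (hνX : ∫ y, ‖y‖ ^ (β + γ) ∂ν ≤ C₁ * X)
    (htv : tvNorm ν μ ≤ C₃ * X * (1 + t) ^ (-(a * (β + 1) + 1))) :
    |∫ y, f y ∂ν| ≤ 2 * Cf * (C₃ + C₁ + ∫ y, ‖y‖ ^ (β + γ) ∂μ) * X *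
      ((1 + t) ^ (-1 - a) + (1 + t) ^ (-(a * γ))) := by
  have h1t : 0 < 1 + t := by linarith
  have hX0 : 0 < X := by linarith
  have hCf : 0 ≤ Cf :=
    nonneg_of_mul_nonneg_left ((abs_nonneg _).trans (hfb 0)) (by positivity)
  have hMν : 0 ≤ ∫ y, ‖y‖ ^ (β + γ) ∂ν := integral_nonneg fun y => by positivity
  have hMμ : 0 ≤ ∫ y, ‖y‖ ^ (β + γ) ∂μ := integral_nonneg fun y => by positivity
  have hC₁ : 0 ≤ C₁ := nonneg_of_mul_nonneg_left (hMν.trans hνX) hX0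
  have hC₃ : 0 ≤ C₃ := nonneg_of_mul_nonneg_left (nonneg_of_mul_nonneg_left
    ((tvNorm_nonneg ν μ).trans htv) (by positivity)) hX0
  have hR : 1 ≤ (1 + t) ^ a := Real.one_le_rpow (by linarith) ha
  have hRβ : ((1 + t) ^ a) ^ β = (1 + t) ^ (a * β) := (Real.rpow_mul h1t.le a β).symm
  have hRγ : ((1 + t) ^ a) ^ (-γ) = (1 + t) ^ (-(a * γ)) := by
    rw [← Real.rpow_mul h1t.le, mul_neg]
  have hexp : (1 + t) ^ (a * β) * (1 + t) ^ (-(a * (β + 1) + 1)) = (1 + t) ^ (-1 - a) := by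
    rw [← Real.rpow_add h1t]; ring_nf
  have hbulk : Cf * (1 + ((1 + t) ^ a) ^ β) * tvNorm ν μ ≤
      2 * Cf * C₃ * X * (1 + t) ^ (-1 - a) :=
    calc Cf * (1 + ((1 + t) ^ a) ^ β) * tvNorm ν μ
        ≤ Cf * (2 * (1 + t) ^ (a * β)) * (C₃ * X * (1 + t) ^ (-(a * (β + 1) + 1))) := by
          have hD : 1 ≤ (1 + t) ^ (a * β) := Real.one_le_rpow (by linarith) (by positivity)
          rw [hRβ]
          exact mul_le_mul (by gcongr; linarith) htv (tvNorm_nonneg ν μ) (by positivity)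
      _ = 2 * Cf * C₃ * X * (1 + t) ^ (-1 - a) := by rw [← hexp]; ring
  have htail : 2 * Cf * ((1 + t) ^ a) ^ (-γ) *
      (∫ y, ‖y‖ ^ (β + γ) ∂ν + ∫ y, ‖y‖ ^ (β + γ) ∂μ) ≤
      2 * Cf * (1 + t) ^ (-(a * γ)) * (C₁ * X + (∫ y, ‖y‖ ^ (β + γ) ∂μ) * X) := by
    rw [hRγ]; gcongr; exact le_mul_of_one_le_right hMμ hX
  have hA : 0 ≤ (1 + t) ^ (-1 - a) := by positivity
  have hB : 0 ≤ (1 + t) ^ (-(a * γ)) := by positivity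
  have := abs_integral_le_of_truncation hf hβ hγ hR hfb hfμ hν hμ
  nlinarith [mul_nonneg (mul_nonneg (mul_nonneg hCf hX0.le) hC₃) hB,
    mul_nonneg (mul_nonneg (mul_nonneg hCf hX0.le) (add_nonneg hC₁ hMμ)) hA]

end Truncation

/-- The interval `(1/γ, (m - 2) / (2 (β + 1)))` for `a` is nonempty because `m > β + 4`. -/
lemma exists_decay_exponents {β m : ℝ} (hβ : 0 ≤ β) (hm : β + 4 < m) :
    ∃ a γ : ℝ, 0 < a ∧ 0 < γ ∧ β + γ + 2 < m ∧ 2 * (a * (β + 1)) + 2 < m ∧ 1 < a * γ := by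
  have hmβ : 0 < m - β := by linarith
  have hβ1 : 0 < 2 * (β + 1) := by linarith
  obtain ⟨a, ha₁, ha₂⟩ : ∃ a, 2 / (m - β) < a ∧ a < (m - 2) / (2 * (β + 1)) := by
    refine exists_between ?_
    rw [div_lt_div_iff₀ hmβ hβ1]
    nlinarith
  have ha : 0 < a := (div_pos two_pos hmβ).trans ha₁
  rw [div_lt_iff₀ hmβ] at ha₁
  rw [lt_div_iff₀ hβ1] at ha₂
  exact ⟨a, (m - β) / 2, ha, by linarith, by linarith, by linarith, by linarith⟩

lemma integrableOn_Ioi_one_add_rpow {q : ℝ} (hq : q < -1) :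
    IntegrableOn (fun t : ℝ => (1 + t) ^ q) (Ioi 0) := by
  have h := (integrable_one_add_norm (E := ℝ) (μ := volume) (r := -q)
    (by simp; linarith)).integrableOn (s := Ioi 0)
  refine h.congr_fun (fun t ht => ?_) measurableSet_Ioi
  simp [Real.norm_of_nonneg (le_of_lt ht)]

lemma stronglyMeasurable_integral_of_measurable_coe {β Ω F : Type*} [MeasurableSpace β]
    [MeasurableSpace Ω] [NormedAddCommGroup F] [NormedSpace ℝ F] {P : β → Measure Ω}
    (hP : ∀ s, MeasurableSet s → Measurable fun b => P b s) {f : Ω → F}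
    (hf : StronglyMeasurable f) : StronglyMeasurable fun b => ∫ y, f y ∂P b :=
  hf.integral_kernel (κ := ⟨P, Measure.measurable_of_measurable_coe P hP⟩)

section Integrability

variable {α : Type*} [MeasurableSpace α] {ν : Measure α} {g : α → ℝ}

lemma integrable_of_lintegral_ofReal_lt_top (hg : AEStronglyMeasurable g ν)
    (hg0 : ∀ a, 0 ≤ g a) (h : ∫⁻ a, ENNReal.ofReal (g a) ∂ν < ⊤) : Integrable g ν :=
  ⟨hg, (hasFiniteIntegral_iff_ofReal (ae_of_all _ hg0)).2 h⟩

lemma integrable_and_integral_le_of_lintegral_ofReal_le (hg : AEStronglyMeasurable g ν)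
    (hg0 : ∀ a, 0 ≤ g a) {C X : ℝ} (hX : 0 ≤ X)
    (h : ∫⁻ a, ENNReal.ofReal (g a) ∂ν ≤ ENNReal.ofReal (C * X)) :
    Integrable g ν ∧ ∫ a, g a ∂ν ≤ max C 0 * X := by
  have h' : ∫⁻ a, ENNReal.ofReal (g a) ∂ν ≤ ENNReal.ofReal (max C 0 * X) :=
    h.trans (ENNReal.ofReal_le_ofReal (by gcongr; exact le_max_left _ _))
  refine ⟨integrable_of_lintegral_ofReal_lt_top hg hg0 (h'.trans_lt ENNReal.ofReal_lt_top), ?_⟩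
  rw [integral_eq_lintegral_of_nonneg_ae (ae_of_all _ hg0) hg]
  exact ENNReal.toReal_le_of_le_ofReal (by positivity) h'

lemma integrable_and_integral_abs_le_of_abs_le_mul {F : α → ℝ} (hF : AEStronglyMeasurable F ν)
    (hg : Integrable g ν) {c : ℝ} (hFg : ∀ᵐ t ∂ν, |F t| ≤ c * g t) :
    Integrable F ν ∧ ∫ t, |F t| ∂ν ≤ c * ∫ t, g t ∂ν := by
  have hcg : Integrable (fun t => c * g t) ν := hg.const_mul c
  have hFi : Integrable F ν := hcg.mono' hF (by simpa only [Real.norm_eq_abs] using hFg)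
  exact ⟨hFi, (integral_mono_ae hFi.abs hcg hFg).trans_eq (integral_const_mul c g)⟩

end Integrability

theorem stmt1_general
    (d : ℕ)
    (P : ℝ → EuclideanSpace ℝ (Fin d) → Measure (EuclideanSpace ℝ (Fin d)))
    (μ : Measure (EuclideanSpace ℝ (Fin d)))
    (hP : ∀ t x, 0 ≤ t → IsProbabilityMeasure (P t x))
    (hμ : IsProbabilityMeasure μ)
    (hmeas : ∀ E : Set (EuclideanSpace ℝ (Fin d)), MeasurableSet E →
      Measurable (fun p : ℝ × EuclideanSpace ℝ (Fin d) => P p.1 p.2 E))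
    (hP1 : ∀ m m' : ℝ, 0 < m → m + 2 < m' → ∃ C : ℝ, ∀ t x, 0 ≤ t →
      ∫⁻ y, ENNReal.ofReal (‖y‖ ^ m) ∂(P t x) ≤ ENNReal.ofReal (C * (1 + ‖x‖ ^ m')))
    (hP2 : ∀ m : ℝ, 0 < m → ∫⁻ y, ENNReal.ofReal (‖y‖ ^ m) ∂μ < ⊤)
    (hP3 : ∀ k m : ℝ, 0 < k → 2 * k + 2 < m → ∃ C : ℝ, ∀ t x, 0 ≤ t →
      tvNorm (P t x) μ ≤ C * (1 + ‖x‖ ^ m) * (1 + t) ^ (-(k + 1)))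
    (β Cf : ℝ) (hβ : 0 ≤ β)
    (f : EuclideanSpace ℝ (Fin d) → ℝ) (hf : Measurable f)
    (hfb : ∀ y, |f y| ≤ Cf * (1 + ‖y‖ ^ β))
    (hfμ : ∫ y, f y ∂μ = 0) :
    ∀ m : ℝ, β + 4 < m →
      ∃ Cm : ℝ,
        (∀ x,
          IntegrableOn (fun t => ∫ y, f y ∂(P t x)) (Ioi (0 : ℝ)) ∧
          IntegrableOn (fun t => |∫ y, f y ∂(P t x)|) (Ioi (0 : ℝ)) ∧
          (∫ t in Ioi (0 : ℝ), |∫ y, f y ∂(P t x)|) ≤ Cm * (1 + ‖x‖ ^ m) ∧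
          |∫ t in Ioi (0 : ℝ), ∫ y, f y ∂(P t x)|
            ≤ ∫ t in Ioi (0 : ℝ), |∫ y, f y ∂(P t x)|) ∧
        Integrable (fun x => ∫ t in Ioi (0 : ℝ), ∫ y, f y ∂(P t x)) μ := by
  intro m hm
  obtain ⟨a, γ, ha, hγ, hγm, ham, haγ⟩ := exists_decay_exponents hβ hm
  obtain ⟨C₁, hC₁⟩ := hP1 (β + γ) m (by positivity) hγm
  obtain ⟨C₃, hC₃⟩ := hP3 (a * (β + 1)) m (by positivity) ham
  have hnorm : ∀ (p : ℝ) (ν : Measure (EuclideanSpace ℝ (Fin d))),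
      AEStronglyMeasurable (fun y => ‖y‖ ^ p) ν :=
    fun p ν => (measurable_norm.pow_const p).aestronglyMeasurable
  have hμmom : ∀ p : ℝ, 0 < p → Integrable (fun y => ‖y‖ ^ p) μ := fun p hp =>
    integrable_of_lintegral_ofReal_lt_top (hnorm p μ) (fun y => by positivity) (hP2 p hp)
  set g : ℝ → ℝ := fun t => (1 + t) ^ (-1 - a) + (1 + t) ^ (-(a * γ))
  set K := 2 * Cf * (C₃ + max C₁ 0 + ∫ y, ‖y‖ ^ (β + γ) ∂μ)
  have hdecay : ∀ x, ∀ t ∈ Ioi (0 : ℝ), |∫ y, f y ∂P t x| ≤ K * (1 + ‖x‖ ^ m) * g t := by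
    intro x t ht
    have := hP t x ht.le
    obtain ⟨hνi, hνX⟩ := integrable_and_integral_le_of_lintegral_ofReal_le (hnorm _ _)
      (fun y => by positivity) (by positivity) (hC₁ t x ht.le)
    exact abs_integral_le_of_tvNorm_le_of_moment_le hf hβ hγ.le ha.le ht.le
      (le_add_of_nonneg_right (by positivity)) hfb hfμ hνi (hμmom _ (by positivity)) hνX
      (hC₃ t x ht.le)
  have hg : IntegrableOn g (Ioi 0) := (integrableOn_Ioi_one_add_rpow (by linarith)).add
    (integrableOn_Ioi_one_add_rpow (by linarith))
  have hF : StronglyMeasurable fun p : ℝ × EuclideanSpace ℝ (Fin d) => ∫ y, f y ∂P p.1 p.2 :=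
    stronglyMeasurable_integral_of_measurable_coe hmeas hf.stronglyMeasurable
  set Cm := K * ∫ t in Ioi 0, g t
  have hbound : ∀ x, IntegrableOn (fun t => ∫ y, f y ∂P t x) (Ioi 0) ∧
      ∫ t in Ioi 0, |∫ y, f y ∂P t x| ≤ Cm * (1 + ‖x‖ ^ m) := fun x =>
    (integrable_and_integral_abs_le_of_abs_le_mul
      (hF.comp_measurable (measurable_id.prodMk measurable_const)).aestronglyMeasurable hg
      (ae_restrict_of_forall_mem measurableSet_Ioi (hdecay x))).imp_right
      fun h => h.trans_eq (by ring)
  refine ⟨Cm, fun x => ⟨(hbound x).1, (hbound x).1.abs, (hbound x).2,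
    abs_integral_le_integral_abs⟩, ?_⟩
  exact ((integrable_const 1).add (hμmom m (by linarith))).const_mul Cm |>.mono'
    hF.integral_prod_left'.aestronglyMeasurable
    (ae_of_all _ fun x => abs_integral_le_integral_abs.trans (hbound x).2)

/-- for every `m > β + 4` there exists `C_m` such that
`ũ(x) = ∫_0^∞ |∫ f dμ_t^x| dt ≤ C_m (1+|x|^m)`; in particular `u` is well defined
(the defining integral converges absolutely), `|u(x)| ≤ ũ(x)`, and `u` is `μ`-integrable. -/
theorem stmt1
    (d : ℕ) (hd : 1 ≤ d)
    (P : ℝ → EuclideanSpace ℝ (Fin d) → Measure (EuclideanSpace ℝ (Fin d)))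
    (μ : Measure (EuclideanSpace ℝ (Fin d)))
    (hP : ∀ t x, 0 ≤ t → IsProbabilityMeasure (P t x))
    (hμ : IsProbabilityMeasure μ)
    (hmeas : ∀ E : Set (EuclideanSpace ℝ (Fin d)), MeasurableSet E →
      Measurable (fun p : ℝ × EuclideanSpace ℝ (Fin d) => P p.1 p.2 E))
    (hP1 : ∀ m m' : ℝ, 0 < m → m + 2 < m' → ∃ C : ℝ, ∀ t x, 0 ≤ t →
      ∫⁻ y, ENNReal.ofReal (‖y‖ ^ m) ∂(P t x) ≤ ENNReal.ofReal (C * (1 + ‖x‖ ^ m')))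
    (hP2 : ∀ m : ℝ, 0 < m → ∫⁻ y, ENNReal.ofReal (‖y‖ ^ m) ∂μ < ⊤)
    (hP3 : ∀ k m : ℝ, 0 < k → 2 * k + 2 < m → ∃ C : ℝ, ∀ t x, 0 ≤ t →
      tvNorm (P t x) μ ≤ C * (1 + ‖x‖ ^ m) * (1 + t) ^ (-(k + 1)))
    (β Cf : ℝ) (hβ : 0 ≤ β) (hCf : 1 ≤ Cf)
    (f : EuclideanSpace ℝ (Fin d) → ℝ) (hf : Measurable f)
    (hfb : ∀ y, |f y| ≤ Cf * (1 + ‖y‖ ^ β))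
    (hfμ : ∫ y, f y ∂μ = 0) :
    ∀ m : ℝ, β + 4 < m →
      ∃ Cm : ℝ,
        (∀ x,
          IntegrableOn (fun t => ∫ y, f y ∂(P t x)) (Ioi (0 : ℝ)) ∧
          IntegrableOn (fun t => |∫ y, f y ∂(P t x)|) (Ioi (0 : ℝ)) ∧
          (∫ t in Ioi (0 : ℝ), |∫ y, f y ∂(P t x)|) ≤ Cm * (1 + ‖x‖ ^ m) ∧
          |∫ t in Ioi (0 : ℝ), ∫ y, f y ∂(P t x)|
            ≤ ∫ t in Ioi (0 : ℝ), |∫ y, f y ∂(P t x)|) ∧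
        Integrable (fun x => ∫ t in Ioi (0 : ℝ), ∫ y, f y ∂(P t x)) μ :=
  stmt1_general d P μ hP hμ hmeas hP1 hP2 hP3 β Cf hβ f hf hfb hfμ
end

section
/- For every t > 0 and every x ∈ ℝ^d, u is μ_t^x-integrable and u(x) = ∫ u(y) μ_t^x(dy) + ∫_0^t (∫ f(y) μ_s^x(dy)) ds; that is, u solves the integral Poisson equation associated with f and the transition semigroup (μ_t^x). -/
open MeasureTheory Set

namespace StmtAux

open ProbabilityTheory

variable {α : Type*} [MeasurableSpace α]

lemma integrable_of_bound {ν : Measure α} [IsFiniteMeasure ν] {h : α → ℝ}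
    (hh : AEStronglyMeasurable h ν) {M : ℝ} (hb : ∀ a, |h a| ≤ M) : Integrable h ν :=
  Integrable.mono' (integrable_const M) hh (ae_of_all _ fun a => by
    simpa [Real.norm_eq_abs] using hb a)

lemma abs_sub_le_of_le {ν₁ ν₂ : Measure α} [IsFiniteMeasure ν₁] [IsFiniteMeasure ν₂]
    (hle : ν₂ ≤ ν₁) {h : α → ℝ} (hh : Measurable h) {M : ℝ} (hb : ∀ a, |h a| ≤ M) :
    |∫ a, h a ∂ν₁ - ∫ a, h a ∂ν₂| ≤ M * (ν₁ univ - ν₂ univ).toReal := by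
  haveI hsub : IsFiniteMeasure (ν₁ - ν₂) := isFiniteMeasure_of_le ν₁ Measure.sub_le
  have hdec : ν₁ - ν₂ + ν₂ = ν₁ := Measure.sub_add_cancel_of_le hle
  have h1 : ∫ a, h a ∂ν₁ = ∫ a, h a ∂(ν₁ - ν₂) + ∫ a, h a ∂ν₂ := by
    rw [← integral_add_measure (integrable_of_bound hh.aestronglyMeasurable hb)
      (integrable_of_bound hh.aestronglyMeasurable hb), hdec]
  rw [h1, add_sub_cancel_right]
  have h2 : ‖∫ a, h a ∂(ν₁ - ν₂)‖ ≤ M * ((ν₁ - ν₂) univ).toReal :=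
    norm_integral_le_of_norm_le_const (ae_of_all _ fun a => by
      simpa [Real.norm_eq_abs] using hb a)
  rw [Real.norm_eq_abs] at h2
  rwa [Measure.sub_apply MeasurableSet.univ hle] at h2

lemma measure_sub_le_tv_part {ν₁ ν₂ : Measure α} [IsFiniteMeasure ν₁] {s : Set α}
    (hs : MeasurableSet s) :
    (ν₁ s - ν₂ s).toReal ≤ (⨆ (E : Set α) (_ : MeasurableSet E), (ν₁ E - ν₂ E)).toReal := by
  apply ENNReal.toReal_mono
  · exact ne_top_of_le_ne_top (measure_ne_top ν₁ univ)
      (iSup₂_le fun E _ => tsub_le_self.trans (measure_mono (subset_univ E)))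
  · exact le_iSup₂ (f := fun E (_ : MeasurableSet E) => ν₁ E - ν₂ E) s hs

lemma abs_integral_sub_integral_le {ν₁ ν₂ : Measure α} [IsFiniteMeasure ν₁] [IsFiniteMeasure ν₂]
    {h : α → ℝ} (hh : Measurable h) {M : ℝ} (hM : 0 ≤ M) (hb : ∀ a, |h a| ≤ M) :
    |∫ a, h a ∂ν₁ - ∫ a, h a ∂ν₂| ≤ M * tvNorm ν₁ ν₂ := by
  obtain ⟨s, hs, hss, hsc⟩ := hahn_decomposition (μ := ν₁) (ν := ν₂)
  have key : ∀ (μ' : Measure α), IsFiniteMeasure μ' →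
      ∫ a, h a ∂μ' = ∫ a in s, h a ∂μ' + ∫ a in sᶜ, h a ∂μ' := fun μ' _ =>
    (integral_add_compl hs (integrable_of_bound hh.aestronglyMeasurable hb)).symm
  have hle1 : ν₂.restrict s ≤ ν₁.restrict s := by
    refine Measure.le_iff.2 fun E hE => ?_
    rw [Measure.restrict_apply hE, Measure.restrict_apply hE]
    exact hss _ (hE.inter hs) inter_subset_right
  have hle2 : ν₁.restrict sᶜ ≤ ν₂.restrict sᶜ := by
    refine Measure.le_iff.2 fun E hE => ?_
    rw [Measure.restrict_apply hE, Measure.restrict_apply hE]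
    exact hsc _ (hE.inter hs.compl) inter_subset_right
  have e1 := abs_sub_le_of_le hle1 hh hb
  have e2 := abs_sub_le_of_le hle2 hh hb
  rw [Measure.restrict_apply_univ, Measure.restrict_apply_univ] at e1 e2
  have t1 := measure_sub_le_tv_part (ν₁ := ν₁) (ν₂ := ν₂) hs
  have t2 := measure_sub_le_tv_part (ν₁ := ν₂) (ν₂ := ν₁) hs.compl
  have e2' : |∫ a in sᶜ, h a ∂ν₁ - ∫ a in sᶜ, h a ∂ν₂| ≤ M * (ν₂ sᶜ - ν₁ sᶜ).toReal := by
    rw [abs_sub_comm]; exact e2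
  calc |∫ a, h a ∂ν₁ - ∫ a, h a ∂ν₂|
      = |(∫ a in s, h a ∂ν₁ - ∫ a in s, h a ∂ν₂) +
          (∫ a in sᶜ, h a ∂ν₁ - ∫ a in sᶜ, h a ∂ν₂)| := by
        rw [key ν₁ inferInstance, key ν₂ inferInstance]; ring_nf
    _ ≤ |∫ a in s, h a ∂ν₁ - ∫ a in s, h a ∂ν₂| +
          |∫ a in sᶜ, h a ∂ν₁ - ∫ a in sᶜ, h a ∂ν₂| := abs_add_le _ _
    _ ≤ M * (ν₁ s - ν₂ s).toReal + M * (ν₂ sᶜ - ν₁ sᶜ).toReal := add_le_add e1 e2'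
    _ ≤ M * tvNorm ν₁ ν₂ := by
        unfold tvNorm
        have u1 := mul_le_mul_of_nonneg_left t1 hM
        have u2 := mul_le_mul_of_nonneg_left t2 hM
        linarith

lemma rpow_le_one_add_rpow {a p q : ℝ} (ha : 0 ≤ a) (hpq : p ≤ q) (hp : 0 ≤ p) :
    a ^ p ≤ 1 + a ^ q := by
  rcases le_total a 1 with h | h
  · have h1 : a ^ p ≤ 1 := Real.rpow_le_one ha h hp
    nlinarith [Real.rpow_nonneg ha q]
  · have h1 : a ^ p ≤ a ^ q := Real.rpow_le_rpow_of_exponent_le h hpq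
    nlinarith

lemma integrable_rpow_norm {E : Type*} [NormedAddCommGroup E] [MeasurableSpace E]
    [OpensMeasurableSpace E] (ν : Measure E) (m : ℝ) (hm0 : 0 ≤ m)
    (hfin : ∫⁻ y, ENNReal.ofReal (‖y‖ ^ m) ∂ν ≠ ⊤) :
    Integrable (fun y => ‖y‖ ^ m) ν ∧
      ∫ y, ‖y‖ ^ m ∂ν = (∫⁻ y, ENNReal.ofReal (‖y‖ ^ m) ∂ν).toReal := by
  have hm : Measurable fun y : E => ‖y‖ ^ m :=
    ((Real.continuous_rpow_const hm0).comp continuous_norm).measurable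
  have hnn : ∀ y : E, 0 ≤ ‖y‖ ^ m := fun y => Real.rpow_nonneg (norm_nonneg y) m
  refine ⟨⟨hm.aestronglyMeasurable, ?_⟩, ?_⟩
  · rw [hasFiniteIntegral_iff_ofReal (ae_of_all _ hnn)]
    exact hfin.lt_top
  · rw [integral_eq_lintegral_of_nonneg_ae (ae_of_all _ hnn) hm.aestronglyMeasurable]

/-- Chapman–Kolmogorov for Bochner integrals. -/
lemma ck_integral (Ps : α → Measure α) (hm : Measurable Ps)
    (hprob : ∀ y, IsProbabilityMeasure (Ps y))
    (μ0 : Measure α) [IsProbabilityMeasure μ0] (ν : Measure α) [IsProbabilityMeasure ν]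
    (hck : ∀ s : Set α, MeasurableSet s → ν s = ∫⁻ y, Ps y s ∂μ0)
    {f : α → ℝ} (hf : Measurable f) (hint : Integrable f ν) :
    ∫ z, f z ∂ν = ∫ y, ∫ z, f z ∂(Ps y) ∂μ0 := by
  let κ : Kernel α α := ⟨Ps, hm⟩
  haveI : IsMarkovKernel κ := ⟨hprob⟩
  have hκapp : ∀ y, κ y = Ps y := fun y => rfl
  have hν : ν = (μ0 ⊗ₘ κ).snd := by
    ext s hs
    rw [Measure.snd_apply hs, Measure.compProd_apply (measurable_snd hs), hck s hs]
    congr 1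
  have hint2 : Integrable (fun p : α × α => f p.2) (μ0 ⊗ₘ κ) := by
    have h1 : Integrable f ((μ0 ⊗ₘ κ).snd) := hν ▸ hint
    have h2 : AEStronglyMeasurable f ((μ0 ⊗ₘ κ).map Prod.snd) := by
      rw [← Measure.snd]; exact hf.aestronglyMeasurable
    exact (integrable_map_measure h2 measurable_snd.aemeasurable).1 h1
  calc ∫ z, f z ∂ν = ∫ z, f z ∂((μ0 ⊗ₘ κ).snd) := by rw [← hν]
    _ = ∫ p : α × α, f p.2 ∂(μ0 ⊗ₘ κ) := by
        have h2 : AEStronglyMeasurable f ((μ0 ⊗ₘ κ).map Prod.snd) := by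
          rw [← Measure.snd]; exact hf.aestronglyMeasurable
        rw [Measure.snd, integral_map measurable_snd.aemeasurable h2]
    _ = ∫ y, ∫ z, f z ∂(κ y) ∂μ0 := Measure.integral_compProd hint2
    _ = ∫ y, ∫ z, f z ∂(Ps y) ∂μ0 := by simp_rw [hκapp]

/-- Joint strong measurability of `(s, y) ↦ ∫ f d(P s y)` (truncated at negative times). -/
lemma stronglyMeasurable_G (P : ℝ → α → Measure α)
    (hmeas : ∀ s : Set α, MeasurableSet s → Measurable fun p : ℝ × α => P p.1 p.2 s)
    (hP : ∀ t x, 0 ≤ t → IsProbabilityMeasure (P t x)) (f : α → ℝ) (hf : Measurable f) :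
    StronglyMeasurable fun p : ℝ × α => ∫ z, f z ∂(if 0 ≤ p.1 then P p.1 p.2 else 0) := by
  have hQm : Measurable fun p : ℝ × α => (if 0 ≤ p.1 then P p.1 p.2 else 0 : Measure α) := by
    apply Measure.measurable_of_measurable_coe
    intro s hs
    have : (fun p : ℝ × α => (if 0 ≤ p.1 then P p.1 p.2 else 0 : Measure α) s)
        = fun p : ℝ × α => if 0 ≤ p.1 then P p.1 p.2 s else 0 := by
      ext p; split <;> simp
    rw [this]
    exact Measurable.ite (measurableSet_le measurable_const measurable_fst)
      (hmeas s hs) measurable_const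
  let Q : Kernel (ℝ × α) α := ⟨fun p => if 0 ≤ p.1 then P p.1 p.2 else 0, hQm⟩
  haveI : IsFiniteKernel Q := by
    refine ⟨⟨1, ENNReal.one_lt_top, fun p => ?_⟩⟩
    show (if 0 ≤ p.1 then P p.1 p.2 else 0 : Measure α) univ ≤ 1
    split
    · haveI := hP p.1 p.2 ‹_›
      simp
    · simp
  have : StronglyMeasurable fun p : ℝ × α => ∫ z, f z ∂(Q p) :=
    StronglyMeasurable.integral_kernel_prod_right'
      (hf.stronglyMeasurable.comp_measurable measurable_snd)
  exact this

lemma integrableOn_one_add_rpow_neg_two :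
    IntegrableOn (fun s : ℝ => (1 + s) ^ (-(2:ℝ))) (Ioi (0:ℝ)) volume := by
  have h0 : IntegrableOn (fun u : ℝ => u ^ (-(2:ℝ))) (Ioi (1:ℝ)) volume :=
    integrableOn_Ioi_rpow_of_lt (by norm_num) one_pos
  have hmp : MeasurePreserving (fun s : ℝ => 1 + s) volume volume :=
    measurePreserving_add_left volume 1
  have h1 := (hmp.integrableOn_comp_preimage (measurableEmbedding_addLeft 1)).2 h0
  have hpre : (fun s : ℝ => 1 + s) ⁻¹' Ioi (1:ℝ) = Ioi (0:ℝ) := by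
    rw [preimage_const_add_Ioi]; norm_num
  rw [hpre] at h1
  exact h1

lemma integral_shift (g : ℝ → ℝ) (t : ℝ) :
    ∫ r in Ioi t, g r = ∫ s in Ioi (0:ℝ), g (t + s) := by
  have h1 := (measurePreserving_add_left volume t).setIntegral_image_emb
    (measurableEmbedding_addLeft t) g (Ioi 0)
  rw [image_const_add_Ioi, add_zero] at h1
  exact h1

end StmtAux

set_option maxHeartbeats 2000000 in
/-- for every `t > 0` and every `x`, `u` is `μ_t^x`-integrable and
`u(x) = ∫ u(y) μ_t^x(dy) + ∫_0^t (∫ f dμ_s^x) ds`: `u` solves the integral Poisson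
equation associated with `f` and the transition semigroup `(μ_t^x)`. -/
theorem stmt3
    (d : ℕ) (hd : 1 ≤ d)
    (P : ℝ → EuclideanSpace ℝ (Fin d) → Measure (EuclideanSpace ℝ (Fin d)))
    (μ : Measure (EuclideanSpace ℝ (Fin d)))
    (hP : ∀ t x, 0 ≤ t → IsProbabilityMeasure (P t x))
    (hμ : IsProbabilityMeasure μ)
    (hmeas : ∀ E : Set (EuclideanSpace ℝ (Fin d)), MeasurableSet E →
      Measurable (fun p : ℝ × EuclideanSpace ℝ (Fin d) => P p.1 p.2 E))
    (hCK0 : ∀ x, P 0 x = Measure.dirac x)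
    (hCK : ∀ s t : ℝ, 0 ≤ s → 0 ≤ t → ∀ x,
      ∀ E : Set (EuclideanSpace ℝ (Fin d)), MeasurableSet E →
        P (t + s) x E = ∫⁻ y, P s y E ∂(P t x))
    (hP1 : ∀ m m' : ℝ, 0 < m → m + 2 < m' → ∃ C : ℝ, ∀ t x, 0 ≤ t →
      ∫⁻ y, ENNReal.ofReal (‖y‖ ^ m) ∂(P t x) ≤ ENNReal.ofReal (C * (1 + ‖x‖ ^ m')))
    (hP2 : ∀ m : ℝ, 0 < m → ∫⁻ y, ENNReal.ofReal (‖y‖ ^ m) ∂μ < ⊤)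
    (hP3 : ∀ k m : ℝ, 0 < k → 2 * k + 2 < m → ∃ C : ℝ, ∀ t x, 0 ≤ t →
      tvNorm (P t x) μ ≤ C * (1 + ‖x‖ ^ m) * (1 + t) ^ (-(k + 1)))
    (β Cf : ℝ) (hβ : 0 ≤ β) (hCf : 1 ≤ Cf)
    (f : EuclideanSpace ℝ (Fin d) → ℝ) (hf : Measurable f)
    (hfb : ∀ y, |f y| ≤ Cf * (1 + ‖y‖ ^ β))
    (hfμ : ∫ y, f y ∂μ = 0) :
    ∀ t : ℝ, 0 < t → ∀ x,
      Integrable (fun y => ∫ r in Ioi (0 : ℝ), ∫ z, f z ∂(P r y)) (P t x) ∧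
      (∫ r in Ioi (0 : ℝ), ∫ z, f z ∂(P r x)) =
        (∫ y, (∫ r in Ioi (0 : ℝ), ∫ z, f z ∂(P r y)) ∂(P t x)) +
          ∫ s in Ioc (0 : ℝ) t, ∫ y, f y ∂(P s x) := by
  classical
  haveI := hμ
  set b : ℝ := β + 1 with hbdef
  have hb1 : (1:ℝ) ≤ b := by rw [hbdef]; linarith
  have hb0 : (0:ℝ) < b := by linarith
  have hCf0 : (0:ℝ) < Cf := lt_of_lt_of_le one_pos hCf
  have hfb2 : ∀ y, |f y| ≤ 2 * Cf * (1 + ‖y‖ ^ b) := by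
    intro y
    have h1 : ‖y‖ ^ β ≤ 1 + ‖y‖ ^ b :=
      StmtAux.rpow_le_one_add_rpow (norm_nonneg y) (by rw [hbdef]; linarith) hβ
    have h2 := hfb y
    have h3 : (0:ℝ) ≤ ‖y‖ ^ b := Real.rpow_nonneg (norm_nonneg y) b
    nlinarith
  obtain ⟨C₀, hC₀⟩ := hP1 b (b + 3) hb0 (by linarith)
  obtain ⟨C₁, hC₁⟩ := hP1 (b + 2) (b + 5) (by linarith) (by linarith)
  obtain ⟨C₂, hC₂⟩ := hP1 (2 * b + 5) (2 * b + 8) (by linarith) (by linarith)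
  obtain ⟨C₃, hC₃⟩ := hP3 (b + 1) (2 * b + 5) (by linarith) (by linarith)
  set C₁' : ℝ := max C₁ 0 with hC₁'def
  set C₃' : ℝ := max C₃ 0 with hC₃'def
  have hC₁'0 : 0 ≤ C₁' := le_max_right _ _
  have hC₃'0 : 0 ≤ C₃' := le_max_right _ _
  set Mμ : ℝ := (∫⁻ y, ENNReal.ofReal (‖y‖ ^ (b + 2)) ∂μ).toReal with hMμdef
  have hMμ0 : 0 ≤ Mμ := ENNReal.toReal_nonneg
  -- integrability of `f` against measures with finite b-th moment
  have hfint : ∀ ν : Measure (EuclideanSpace ℝ (Fin d)), IsProbabilityMeasure ν →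
      (∫⁻ y, ENNReal.ofReal (‖y‖ ^ b) ∂ν) ≠ ⊤ → Integrable f ν := by
    intro ν hν hfin
    haveI := hν
    have h1 := (StmtAux.integrable_rpow_norm ν b hb0.le hfin).1
    refine Integrable.mono' ((integrable_const (2 * Cf)).add (h1.const_mul (2 * Cf)))
      hf.aestronglyMeasurable (ae_of_all _ fun y => ?_)
    have h2 := hfb2 y
    have h3 : (0:ℝ) ≤ ‖y‖ ^ b := Real.rpow_nonneg (norm_nonneg y) b
    show ‖f y‖ ≤ 2 * Cf + 2 * Cf * ‖y‖ ^ b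
    rw [Real.norm_eq_abs]
    nlinarith
  have hfintP : ∀ s x', 0 ≤ s → Integrable f (P s x') := by
    intro s x' hs
    haveI := hP s x' hs
    exact hfint (P s x') inferInstance
      (ne_top_of_le_ne_top ENNReal.ofReal_ne_top (hC₀ s x' hs))
  have hfintμ : Integrable f μ := hfint μ hμ (hP2 b hb0).ne
  -- moment bounds for the transition measures
  have hmom : ∀ s x', 0 ≤ s → Integrable (fun y => ‖y‖ ^ (b + 2)) (P s x') ∧
      ∫ y, ‖y‖ ^ (b + 2) ∂(P s x') ≤ C₁' * (1 + ‖x'‖ ^ (b + 5)) := by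
    intro s x' hs
    have hfin : (∫⁻ y, ENNReal.ofReal (‖y‖ ^ (b + 2)) ∂(P s x')) ≠ ⊤ :=
      ne_top_of_le_ne_top ENNReal.ofReal_ne_top (hC₁ s x' hs)
    obtain ⟨hi, he⟩ := StmtAux.integrable_rpow_norm (P s x') (b + 2) (by linarith) hfin
    refine ⟨hi, ?_⟩
    rw [he]
    have hz : (0:ℝ) ≤ 1 + ‖x'‖ ^ (b + 5) := by
      have := Real.rpow_nonneg (norm_nonneg x') (b + 5); linarith
    have hle2 : ∫⁻ y, ENNReal.ofReal (‖y‖ ^ (b + 2)) ∂(P s x')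
        ≤ ENNReal.ofReal (C₁' * (1 + ‖x'‖ ^ (b + 5))) :=
      (hC₁ s x' hs).trans (ENNReal.ofReal_le_ofReal
        (mul_le_mul_of_nonneg_right (le_max_left _ _) hz))
    have := ENNReal.toReal_mono ENNReal.ofReal_ne_top hle2
    rwa [ENNReal.toReal_ofReal (mul_nonneg hC₁'0 hz)] at this
  have hmomμ := StmtAux.integrable_rpow_norm μ (b + 2) (by linarith) (hP2 (b + 2) (by linarith)).ne
  -- the key decay bound
  set K : ℝ := 4 * Cf * C₃' + 8 * Cf * C₁' + 4 * Cf * Mμ with hKdef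
  have hK0 : 0 ≤ K := by positivity
  have gbound : ∀ s x', 0 ≤ s →
      |∫ z, f z ∂(P s x')| ≤ K * (1 + ‖x'‖ ^ (2 * b + 5)) * (1 + s) ^ (-(2:ℝ)) := by
    intro s x' hs
    haveI := hP s x' hs
    set R : ℝ := 1 + s with hRdef
    have hR1 : (1:ℝ) ≤ R := by rw [hRdef]; linarith
    have hR0 : (0:ℝ) < R := by linarith
    set h : EuclideanSpace ℝ (Fin d) → ℝ := fun y => if ‖y‖ ≤ R then f y else 0 with hhdef
    have hhm : Measurable h :=
      Measurable.ite (measurableSet_le measurable_norm measurable_const) hf measurable_const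
    have hRb0 : (0:ℝ) ≤ R ^ b := Real.rpow_nonneg hR0.le b
    set Mh : ℝ := 2 * Cf * (1 + R ^ b) with hMhdef
    have hMh0 : 0 ≤ Mh := by rw [hMhdef]; nlinarith
    have hhb : ∀ y, |h y| ≤ Mh := by
      intro y
      rw [hhdef]
      dsimp only
      split
      · have h2 : ‖y‖ ^ b ≤ R ^ b := Real.rpow_le_rpow (norm_nonneg y) ‹‖y‖ ≤ R› hb0.le
        have := hfb2 y
        rw [hMhdef]; nlinarith
      · simpa using hMh0
    have htail : ∀ y, |f y - h y| ≤ 4 * Cf * R ^ (-(2:ℝ)) * ‖y‖ ^ (b + 2) := by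
      intro y
      rw [hhdef]
      dsimp only
      split
      · have h1 : (0:ℝ) ≤ 4 * Cf * R ^ (-(2:ℝ)) * ‖y‖ ^ (b + 2) := by positivity
        simpa using h1
      · rename_i hy
        push_neg at hy
        have hy1 : 1 ≤ ‖y‖ := le_trans hR1 hy.le
        have hy0 : (0:ℝ) < ‖y‖ := lt_of_lt_of_le one_pos hy1
        have hyb : 1 ≤ ‖y‖ ^ b := Real.one_le_rpow hy1 hb0.le
        have e2 : ‖y‖ ^ (b + 2) = ‖y‖ ^ b * ‖y‖ ^ (2:ℝ) := Real.rpow_add hy0 b 2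
        have e3 : R ^ (2:ℝ) ≤ ‖y‖ ^ (2:ℝ) := Real.rpow_le_rpow hR0.le hy.le (by norm_num)
        have e4 : R ^ (-(2:ℝ)) = (R ^ (2:ℝ))⁻¹ := Real.rpow_neg hR0.le 2
        have hR2 : (0:ℝ) < R ^ (2:ℝ) := Real.rpow_pos_of_pos hR0 2
        have hf2 := hfb2 y
        have hfy0 : (0:ℝ) ≤ |f y| := abs_nonneg _
        have key : |f y| * R ^ (2:ℝ) ≤ 4 * Cf * ‖y‖ ^ (b + 2) := by
          calc |f y| * R ^ (2:ℝ) ≤ (2 * Cf * (1 + ‖y‖ ^ b)) * ‖y‖ ^ (2:ℝ) := by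
                apply mul_le_mul hf2 e3 hR2.le
                nlinarith
            _ ≤ (4 * Cf * ‖y‖ ^ b) * ‖y‖ ^ (2:ℝ) := by
                have h2 : (0:ℝ) ≤ ‖y‖ ^ (2:ℝ) := Real.rpow_nonneg hy0.le 2
                have hprod0 : 0 ≤ Cf * ((‖y‖ ^ b - 1) * ‖y‖ ^ (2:ℝ)) :=
                  mul_nonneg hCf0.le (mul_nonneg (by linarith) h2)
                nlinarith [hprod0]
            _ = 4 * Cf * ‖y‖ ^ (b + 2) := by rw [e2]; ring
        rw [sub_zero, e4]
        calc |f y| = |f y| * R ^ (2:ℝ) * (R ^ (2:ℝ))⁻¹ := by field_simp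
          _ ≤ 4 * Cf * ‖y‖ ^ (b + 2) * (R ^ (2:ℝ))⁻¹ :=
              mul_le_mul_of_nonneg_right key (inv_nonneg.2 hR2.le)
          _ = 4 * Cf * (R ^ (2:ℝ))⁻¹ * ‖y‖ ^ (b + 2) := by ring
    -- integrability
    have hintf : Integrable f (P s x') := hfintP s x' hs
    have hinth : Integrable h (P s x') := StmtAux.integrable_of_bound hhm.aestronglyMeasurable hhb
    have hinthμ : Integrable h μ := StmtAux.integrable_of_bound hhm.aestronglyMeasurable hhb
    have hintd : Integrable (fun y => f y - h y) (P s x') := hintf.sub hinth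
    have hintdμ : Integrable (fun y => f y - h y) μ := hfintμ.sub hinthμ
    obtain ⟨him, hibound⟩ := hmom s x' hs
    -- the three pieces
    have c0 : (0:ℝ) ≤ 4 * Cf * R ^ (-(2:ℝ)) := by positivity
    have hDp : |∫ y, (f y - h y) ∂(P s x')|
        ≤ 4 * Cf * R ^ (-(2:ℝ)) * (C₁' * (1 + ‖x'‖ ^ (b + 5))) := by
      calc |∫ y, (f y - h y) ∂(P s x')| ≤ ∫ y, |f y - h y| ∂(P s x') := by
            rw [← Real.norm_eq_abs]
            exact (norm_integral_le_integral_norm _).trans (le_of_eq (by simp [Real.norm_eq_abs]))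
        _ ≤ ∫ y, 4 * Cf * R ^ (-(2:ℝ)) * ‖y‖ ^ (b + 2) ∂(P s x') :=
            integral_mono hintd.abs (him.const_mul _) htail
        _ = 4 * Cf * R ^ (-(2:ℝ)) * ∫ y, ‖y‖ ^ (b + 2) ∂(P s x') := integral_const_mul _ _
        _ ≤ 4 * Cf * R ^ (-(2:ℝ)) * (C₁' * (1 + ‖x'‖ ^ (b + 5))) :=
            mul_le_mul_of_nonneg_left hibound c0
    have hDμ : |∫ y, (f y - h y) ∂μ| ≤ 4 * Cf * R ^ (-(2:ℝ)) * Mμ := by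
      calc |∫ y, (f y - h y) ∂μ| ≤ ∫ y, |f y - h y| ∂μ := by
            rw [← Real.norm_eq_abs]
            exact (norm_integral_le_integral_norm _).trans (le_of_eq (by simp [Real.norm_eq_abs]))
        _ ≤ ∫ y, 4 * Cf * R ^ (-(2:ℝ)) * ‖y‖ ^ (b + 2) ∂μ :=
            integral_mono hintdμ.abs (hmomμ.1.const_mul _) htail
        _ = 4 * Cf * R ^ (-(2:ℝ)) * ∫ y, ‖y‖ ^ (b + 2) ∂μ := integral_const_mul _ _
        _ = 4 * Cf * R ^ (-(2:ℝ)) * Mμ := by rw [hmomμ.2]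
    have htv : |∫ y, h y ∂(P s x') - ∫ y, h y ∂μ|
        ≤ Mh * (C₃' * (1 + ‖x'‖ ^ (2 * b + 5)) * (1 + s) ^ (-(b + 2))) := by
      have h1 := StmtAux.abs_integral_sub_integral_le (ν₁ := P s x') (ν₂ := μ) hhm hMh0 hhb
      have h2 := hC₃ s x' hs
      have he : (-(b + 1 + 1) : ℝ) = -(b + 2) := by ring
      rw [he] at h2
      have hz : (0:ℝ) ≤ (1 + ‖x'‖ ^ (2 * b + 5)) * (1 + s) ^ (-(b + 2)) := by positivity
      have h3 : tvNorm (P s x') μ ≤ C₃' * (1 + ‖x'‖ ^ (2 * b + 5)) * (1 + s) ^ (-(b + 2)) := by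
        calc tvNorm (P s x') μ ≤ C₃ * (1 + ‖x'‖ ^ (2 * b + 5)) * (1 + s) ^ (-(b + 2)) := h2
          _ ≤ C₃' * (1 + ‖x'‖ ^ (2 * b + 5)) * (1 + s) ^ (-(b + 2)) := by
              rw [mul_assoc, mul_assoc]
              exact mul_le_mul_of_nonneg_right (le_max_left _ _) hz
      calc |∫ y, h y ∂(P s x') - ∫ y, h y ∂μ| ≤ Mh * tvNorm (P s x') μ := h1
        _ ≤ Mh * (C₃' * (1 + ‖x'‖ ^ (2 * b + 5)) * (1 + s) ^ (-(b + 2))) := by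
            apply mul_le_mul_of_nonneg_left _ hMh0
            rw [mul_assoc] at h3 ⊢
            exact h3
    -- decomposition
    have hsplit : ∫ z, f z ∂(P s x') = (∫ y, h y ∂(P s x') - ∫ y, h y ∂μ)
        + ∫ y, (f y - h y) ∂(P s x') - ∫ y, (f y - h y) ∂μ := by
      have e1 : ∫ y, (f y - h y) ∂(P s x') = ∫ y, f y ∂(P s x') - ∫ y, h y ∂(P s x') :=
        integral_sub hintf hinth
      have e2 : ∫ y, (f y - h y) ∂μ = ∫ y, f y ∂μ - ∫ y, h y ∂μ := integral_sub hfintμ hinthμ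
      rw [e1, e2, hfμ]; ring
    have hraw : |∫ z, f z ∂(P s x')|
        ≤ Mh * (C₃' * (1 + ‖x'‖ ^ (2 * b + 5)) * (1 + s) ^ (-(b + 2)))
          + 4 * Cf * R ^ (-(2:ℝ)) * (C₁' * (1 + ‖x'‖ ^ (b + 5)))
          + 4 * Cf * R ^ (-(2:ℝ)) * Mμ := by
      rw [hsplit]
      have a1 := abs_add_le (∫ y, h y ∂(P s x') - ∫ y, h y ∂μ) (∫ y, (f y - h y) ∂(P s x'))
      have a2 := abs_add_le ((∫ y, h y ∂(P s x') - ∫ y, h y ∂μ) + ∫ y, (f y - h y) ∂(P s x'))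
        (-(∫ y, (f y - h y) ∂μ))
      rw [abs_neg] at a2
      have : (∫ y, h y ∂(P s x') - ∫ y, h y ∂μ) + (∫ y, (f y - h y) ∂(P s x'))
          - ∫ y, (f y - h y) ∂μ
          = ((∫ y, h y ∂(P s x') - ∫ y, h y ∂μ) + ∫ y, (f y - h y) ∂(P s x'))
            + (-(∫ y, (f y - h y) ∂μ)) := by ring
      rw [this]
      calc |_| ≤ _ := a2
        _ ≤ _ := by
          have := add_le_add (add_le_add (a1.trans (add_le_add htv hDp)) (le_refl 0)) hDμ
          linarith [htv, hDp, hDμ, a1]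
    -- final arithmetic
    set X : ℝ := 1 + ‖x'‖ ^ (2 * b + 5) with hXdef
    have hX1 : 1 ≤ X := by
      have := Real.rpow_nonneg (norm_nonneg x') (2 * b + 5); rw [hXdef]; linarith
    set S2 : ℝ := R ^ (-(2:ℝ)) with hS2def
    set Sb : ℝ := R ^ b with hSbdef
    set Sk : ℝ := R ^ (-(b + 2)) with hSkdef
    have hprod : Sb * Sk = S2 := by
      rw [hSbdef, hSkdef, hS2def, ← Real.rpow_add hR0]
      norm_num
    have hSb1 : 1 ≤ Sb := Real.one_le_rpow hR1 hb0.le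
    have hSk0 : 0 ≤ Sk := Real.rpow_nonneg hR0.le _
    have hS20 : 0 ≤ S2 := Real.rpow_nonneg hR0.le _
    have hX5 : 1 + ‖x'‖ ^ (b + 5) ≤ 2 * X := by
      have h1 : ‖x'‖ ^ (b + 5) ≤ 1 + ‖x'‖ ^ (2 * b + 5) :=
        StmtAux.rpow_le_one_add_rpow (norm_nonneg x') (by linarith) (by linarith)
      rw [hXdef]; linarith
    have hX50 : (0:ℝ) ≤ 1 + ‖x'‖ ^ (b + 5) := by
      have := Real.rpow_nonneg (norm_nonneg x') (b + 5); linarith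
    have t1 : Mh * (C₃' * X * Sk) ≤ 4 * Cf * C₃' * X * S2 := by
      have h1 : 1 + Sb ≤ 2 * Sb := by linarith
      have hcxk : (0:ℝ) ≤ C₃' * X * Sk := by
        apply mul_nonneg (mul_nonneg hC₃'0 (by linarith)) hSk0
      calc Mh * (C₃' * X * Sk) = 2 * Cf * (1 + Sb) * (C₃' * X * Sk) := by rw [hMhdef]
        _ ≤ 2 * Cf * (2 * Sb) * (C₃' * X * Sk) := by
            apply mul_le_mul_of_nonneg_right _ hcxk
            nlinarith
        _ = 4 * Cf * C₃' * X * (Sb * Sk) := by ring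
        _ = 4 * Cf * C₃' * X * S2 := by rw [hprod]
    have t2 : 4 * Cf * S2 * (C₁' * (1 + ‖x'‖ ^ (b + 5))) ≤ 8 * Cf * C₁' * X * S2 := by
      have h1 : C₁' * (1 + ‖x'‖ ^ (b + 5)) ≤ C₁' * (2 * X) :=
        mul_le_mul_of_nonneg_left hX5 hC₁'0
      calc 4 * Cf * S2 * (C₁' * (1 + ‖x'‖ ^ (b + 5))) ≤ 4 * Cf * S2 * (C₁' * (2 * X)) := by
            apply mul_le_mul_of_nonneg_left h1 (by positivity)
        _ = 8 * Cf * C₁' * X * S2 := by ring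
    have t3 : 4 * Cf * S2 * Mμ ≤ 4 * Cf * Mμ * X * S2 := by
      nlinarith [mul_nonneg (mul_nonneg (by positivity : (0:ℝ) ≤ 4 * Cf) hS20) hMμ0]
    rw [hKdef]
    nlinarith [hraw, t1, t2, t3]
  -- the truncated kernel integral
  intro t ht x
  haveI hPtx := hP t x ht.le
  set G : ℝ × EuclideanSpace ℝ (Fin d) → ℝ :=
    fun p => ∫ z, f z ∂(if 0 ≤ p.1 then P p.1 p.2 else 0) with hGdef
  have hGsm : StronglyMeasurable G := StmtAux.stronglyMeasurable_G P hmeas hP f hf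
  have hGeq : ∀ s y, 0 ≤ s → G (s, y) = ∫ z, f z ∂(P s y) := by
    intro s y hs
    rw [hGdef]
    simp only [if_pos hs]
  have hGb : ∀ s y, 0 ≤ s →
      |G (s, y)| ≤ K * (1 + ‖y‖ ^ (2 * b + 5)) * (1 + s) ^ (-(2:ℝ)) := by
    intro s y hs
    rw [hGeq s y hs]
    exact gbound s y hs
  -- integrable weight
  have hw : Integrable (fun y => K * (1 + ‖y‖ ^ (2 * b + 5))) (P t x) := by
    have hfin : (∫⁻ y, ENNReal.ofReal (‖y‖ ^ (2 * b + 5)) ∂(P t x)) ≠ ⊤ :=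
      ne_top_of_le_ne_top ENNReal.ofReal_ne_top (hC₂ t x ht.le)
    have h1 := (StmtAux.integrable_rpow_norm (P t x) (2 * b + 5) (by linarith) hfin).1
    exact ((integrable_const (1:ℝ)).add h1).const_mul K
  -- product integrability
  have hFsm : StronglyMeasurable fun q : EuclideanSpace ℝ (Fin d) × ℝ => G (q.2, q.1) :=
    hGsm.comp_measurable measurable_swap
  have hφ : Integrable (fun q : EuclideanSpace ℝ (Fin d) × ℝ =>
      (K * (1 + ‖q.1‖ ^ (2 * b + 5))) * (1 + q.2) ^ (-(2:ℝ)))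
      ((P t x).prod (volume.restrict (Ioi (0:ℝ)))) :=
    hw.mul_prod StmtAux.integrableOn_one_add_rpow_neg_two
  have hFint : Integrable (fun q : EuclideanSpace ℝ (Fin d) × ℝ => G (q.2, q.1))
      ((P t x).prod (volume.restrict (Ioi (0:ℝ)))) := by
    refine hφ.mono' hFsm.aestronglyMeasurable ?_
    have hρ : (P t x).prod (volume.restrict (Ioi (0:ℝ)))
        = ((P t x).prod volume).restrict (univ ×ˢ Ioi 0) := by
      rw [← Measure.prod_restrict, Measure.restrict_univ]
    rw [hρ]
    refine (ae_restrict_iff' (MeasurableSet.univ.prod measurableSet_Ioi)).2 (ae_of_all _ ?_)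
    rintro ⟨y, s⟩ hys
    have hs : (0:ℝ) < s := hys.2
    rw [Real.norm_eq_abs]
    exact hGb s y hs.le
  -- rewriting u
  have huy : ∀ y, (∫ r in Ioi (0:ℝ), ∫ z, f z ∂(P r y)) = ∫ r in Ioi (0:ℝ), G (r, y) := by
    intro y
    exact setIntegral_congr_fun measurableSet_Ioi fun r hr => (hGeq r y (le_of_lt hr)).symm
  have hu_int : Integrable (fun y => ∫ r in Ioi (0:ℝ), ∫ z, f z ∂(P r y)) (P t x) := by
    have h1 : Integrable (fun y => ∫ s in Ioi (0:ℝ), G (s, y)) (P t x) :=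
      hFint.integral_prod_left
    exact h1.congr (ae_of_all _ fun y => (huy y).symm)
  -- Fubini swap
  have hswap : ∫ y, (∫ s in Ioi (0:ℝ), G (s, y)) ∂(P t x)
      = ∫ s in Ioi (0:ℝ), ∫ y, G (s, y) ∂(P t x) :=
    integral_integral_swap hFint
  -- Chapman-Kolmogorov pointwise
  have hck_s : ∀ s : ℝ, 0 < s → ∫ y, G (s, y) ∂(P t x) = G (t + s, x) := by
    intro s hs
    have hPs_meas : Measurable fun y => P s y :=
      Measure.measurable_of_measurable_coe _ fun E hE =>
        (hmeas E hE).comp (measurable_const.prodMk measurable_id)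
    haveI := hP (t + s) x (by linarith)
    have hintts := hfintP (t + s) x (by linarith)
    have e1 : ∫ y, G (s, y) ∂(P t x) = ∫ y, ∫ z, f z ∂(P s y) ∂(P t x) :=
      integral_congr_ae (ae_of_all _ fun y => hGeq s y hs.le)
    rw [e1, hGeq (t + s) x (by linarith)]
    exact (StmtAux.ck_integral (fun y => P s y) hPs_meas (fun y => hP s y hs.le)
      (P t x) (P (t + s) x) (fun E hE => hCK s t hs.le ht.le x E hE) hf hintts).symm
  have hstep : ∫ s in Ioi (0:ℝ), ∫ y, G (s, y) ∂(P t x) = ∫ s in Ioi (0:ℝ), G (t + s, x) :=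
    setIntegral_congr_fun measurableSet_Ioi fun s hs => hck_s s hs
  have hshift : ∫ r in Ioi t, G (r, x) = ∫ s in Ioi (0:ℝ), G (t + s, x) :=
    StmtAux.integral_shift (fun r => G (r, x)) t
  -- integrability on Ioi 0
  have hGx_int : IntegrableOn (fun r => G (r, x)) (Ioi (0:ℝ)) volume := by
    refine Integrable.mono'
      (StmtAux.integrableOn_one_add_rpow_neg_two.const_mul (K * (1 + ‖x‖ ^ (2 * b + 5))))
      ((hGsm.comp_measurable (measurable_id.prodMk measurable_const)).aestronglyMeasurable) ?_
    refine (ae_restrict_iff' measurableSet_Ioi).2 (ae_of_all _ fun r hr => ?_)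
    rw [Real.norm_eq_abs]
    exact hGb r x (le_of_lt hr)
  -- splitting the integral
  have hunion : Ioc (0:ℝ) t ∪ Ioi t = Ioi (0:ℝ) := Ioc_union_Ioi_eq_Ioi ht.le
  have hsplit2 : ∫ r in Ioi (0:ℝ), G (r, x)
      = (∫ r in Ioc (0:ℝ) t, G (r, x)) + ∫ r in Ioi t, G (r, x) := by
    rw [← hunion]
    exact setIntegral_union (Ioc_disjoint_Ioi le_rfl) measurableSet_Ioi
      (hGx_int.mono_set Ioc_subset_Ioi_self) (hGx_int.mono_set (Ioi_subset_Ioi ht.le))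
  refine ⟨hu_int, ?_⟩
  have rhs1 : (∫ y, (∫ r in Ioi (0:ℝ), ∫ z, f z ∂(P r y)) ∂(P t x)) = ∫ r in Ioi t, G (r, x) := by
    calc (∫ y, (∫ r in Ioi (0:ℝ), ∫ z, f z ∂(P r y)) ∂(P t x))
        = ∫ y, (∫ s in Ioi (0:ℝ), G (s, y)) ∂(P t x) :=
          integral_congr_ae (ae_of_all _ fun y => huy y)
      _ = ∫ s in Ioi (0:ℝ), ∫ y, G (s, y) ∂(P t x) := hswap
      _ = ∫ s in Ioi (0:ℝ), G (t + s, x) := hstep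
      _ = ∫ r in Ioi t, G (r, x) := hshift.symm
  have rhs2 : (∫ s in Ioc (0:ℝ) t, ∫ y, f y ∂(P s x)) = ∫ r in Ioc (0:ℝ) t, G (r, x) :=
    setIntegral_congr_fun measurableSet_Ioc fun s hs => (hGeq s x (le_of_lt hs.1)).symm
  rw [huy x, rhs1, rhs2, hsplit2]
  ring
end

section
/- For every E ∈ 𝒮 suppose P(E) ≥ c^{−1} μ(E ∩ A) and P'(E) ≥ c^{−1} μ(E ∩ A). Then ∫_S min(φ(y), 1) P'(dy) ≥ μ(A)/c. (This is the key step showing that a strong local Doeblin minorization implies the local Doeblin overlap condition with constant q = μ(A)/c.) -/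
open MeasureTheory

/-! Let `s` carry all of `P'` and none of the singular part of `P`, and let `F = s ∩ {φ < 1}`.
Then `∫ min(φ, 1) dP' = P F + P' Fᶜ`: on `F` the integrand is `φ`, whose integral over a set
missing the singular part is its `P`-measure, and `P'`-a.e. on `Fᶜ` the integrand is `1`.
The measure `ρ = c⁻¹ μ|_A` lies below both `P` and `P'`, so
`μ A / c = ρ F + ρ Fᶜ ≤ P F + P' Fᶜ`. -/

namespace MeasureTheory.Measure

variable {α : Type*} [MeasurableSpace α]

theorem exists_lintegral_min_rnDeriv_one_eq (μ ν : Measure α) [μ.HaveLebesgueDecomposition ν] :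
    ∃ F, MeasurableSet F ∧ ∫⁻ x, min (μ.rnDeriv ν x) 1 ∂ν = μ F + ν Fᶜ := by
  obtain ⟨s, hs, hμs, hνs⟩ := μ.mutuallySingular_singularPart ν
  set φ := μ.rnDeriv ν
  set F := s ∩ {x | φ x < 1}
  have hF : MeasurableSet F :=
    hs.inter (measurableSet_lt (measurable_rnDeriv μ ν) measurable_const)
  refine ⟨F, hF, ?_⟩
  have on_F : ∫⁻ x in F, min (φ x) 1 ∂ν = μ F := by
    have hsing : μ.singularPart ν F = 0 := measure_mono_null Set.inter_subset_left hμs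
    conv_rhs => rw [haveLebesgueDecomposition_add μ ν]
    rw [add_apply, hsing, zero_add, withDensity_apply _ hF]
    exact setLIntegral_congr_fun hF fun x hx => min_eq_left hx.2.le
  have on_compl : ∫⁻ x in Fᶜ, min (φ x) 1 ∂ν = ν Fᶜ := by
    have h_ae_s : ∀ᵐ x ∂ν, x ∈ s := mem_ae_iff.mpr hνs
    rw [← setLIntegral_one]
    refine setLIntegral_congr_fun_ae hF.compl ?_
    filter_upwards [h_ae_s] with x hxs hxF
    exact min_eq_right (not_lt.mp fun h => hxF ⟨hxs, h⟩)
  rw [← lintegral_add_compl _ hF, on_F, on_compl]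

theorem measure_univ_le_lintegral_min_rnDeriv_one {ρ μ ν : Measure α}
    [μ.HaveLebesgueDecomposition ν] (hρμ : ρ ≤ μ) (hρν : ρ ≤ ν) :
    ρ Set.univ ≤ ∫⁻ x, min (μ.rnDeriv ν x) 1 ∂ν := by
  obtain ⟨F, hF, h_eq⟩ := exists_lintegral_min_rnDeriv_one_eq μ ν
  calc ρ Set.univ = ρ F + ρ Fᶜ := (measure_add_measure_compl hF).symm
    _ ≤ μ F + ν Fᶜ := add_le_add (hρμ F) (hρν Fᶜ)
    _ = _ := h_eq.symm

end MeasureTheory.Measure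

theorem stmt8_general
    {S : Type*} [MeasurableSpace S]
    (Pm P' μ : Measure S)
    [IsProbabilityMeasure Pm] [IsProbabilityMeasure P']
    (A : Set S)
    (c : ENNReal)
    (hPlow : ∀ E : Set S, MeasurableSet E → μ (E ∩ A) / c ≤ Pm E)
    (hP'low : ∀ E : Set S, MeasurableSet E → μ (E ∩ A) / c ≤ P' E) :
    μ A / c ≤ ∫⁻ y, min (Pm.rnDeriv P' y) 1 ∂P' := by
  have minorant_apply (E : Set S) (hE : MeasurableSet E) :
      (c⁻¹ • μ.restrict A) E = μ (E ∩ A) / c := by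
    rw [Measure.smul_apply, Measure.restrict_apply hE, smul_eq_mul, ENNReal.div_eq_inv_mul]
  have h := Measure.measure_univ_le_lintegral_min_rnDeriv_one (ρ := c⁻¹ • μ.restrict A)
    (Measure.le_iff.mpr fun E hE => (minorant_apply E hE).trans_le (hPlow E hE))
    (Measure.le_iff.mpr fun E hE => (minorant_apply E hE).trans_le (hP'low E hE))
  rwa [minorant_apply _ MeasurableSet.univ, Set.univ_inter] at h

/-- if `P(E) ≥ c⁻¹ μ(E ∩ A)` and `P'(E) ≥ c⁻¹ μ(E ∩ A)` for every
measurable `E`, then `∫ min(φ, 1) dP' ≥ μ(A)/c`, where `φ = dP/dP'` is the density of the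
absolutely continuous part in the Lebesgue decomposition of `P` with respect to `P'`. -/
theorem stmt8
    {S : Type*} [MeasurableSpace S]
    (Pm P' μ : Measure S)
    [IsProbabilityMeasure Pm] [IsProbabilityMeasure P'] [IsProbabilityMeasure μ]
    (A : Set S) (hA : MeasurableSet A) (hA0 : 0 < μ A)
    (c : ENNReal) (hc : 1 ≤ c) (hc' : c ≠ ⊤)
    (hPlow : ∀ E : Set S, MeasurableSet E → μ (E ∩ A) / c ≤ Pm E)
    (hP'low : ∀ E : Set S, MeasurableSet E → μ (E ∩ A) / c ≤ P' E) :
    μ A / c ≤ ∫⁻ y, min (Pm.rnDeriv P' y) 1 ∂P' :=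
  stmt8_general Pm P' μ A c hPlow hP'low
end

section
/- For every Borel measurable v : ℝ^d → ℝ satisfying |v(y)| ≤ C(1+|y|^{m̃}) for all y ∈ ℝ^d (for some constant C), one has ∫ v dν_n → ∫ v dμ as n → ∞. -/
open MeasureTheory Set Filter

/-!
Split `v` at the sphere of radius `R`. Inside the ball `v` is bounded by `C (1 + R^m̃)`, so
the difference of its integrals is at most twice that bound times `‖ν_n − μ‖`. Outside the
ball `|v(y)| ≤ 2C R^{m̃-m} |y|^m`, so by the moment bound the tails contribute at most
`4 C M R^{m̃-m}`, which is small for large `R` because `m̃ < m`.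
-/

section TotalVariation

variable {α : Type*} [MeasurableSpace α]

lemma tvNorm_nonneg_s12 (P Q : Measure α) : 0 ≤ tvNorm P Q :=
  add_nonneg ENNReal.toReal_nonneg ENNReal.toReal_nonneg

/-- Layer cake: `∫ g dP = ∫₀^K P{g > t} dt` and `P{g > t} ≤ Q{g > t} + sup_E (P E - Q E)`. -/
lemma integral_sub_integral_le_of_nonneg_of_le (P Q : Measure α) [IsFiniteMeasure P]
    [IsFiniteMeasure Q] {g : α → ℝ} (hg : Measurable g) {K : ℝ} (hK : 0 ≤ K)
    (hg0 : ∀ x, 0 ≤ g x) (hgK : ∀ x, g x ≤ K) :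
    ∫ x, g x ∂P - ∫ x, g x ∂Q ≤
      K * (⨆ (E : Set α) (_ : MeasurableSet E), (P E - Q E)).toReal := by
  set S := ⨆ (E : Set α) (_ : MeasurableSet E), (P E - Q E)
  have hS : S ≠ ⊤ :=
    ne_top_of_le_ne_top (measure_ne_top P univ) (iSup₂_le fun E _ => tsub_le_self.trans
      (measure_mono (subset_univ E)))
  have hQ : ∫⁻ x, ENNReal.ofReal (g x) ∂Q ≠ ⊤ :=
    ne_top_of_le_ne_top (by rw [lintegral_const]; finiteness)
      (lintegral_mono fun x => ENNReal.ofReal_le_ofReal (hgK x))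
  have hlevel : ∀ t ∈ Ioi (0 : ℝ),
      P {a | t < g a} ≤ Q {a | t < g a} + (Ioc 0 K).indicator (fun _ => S) t := by
    intro t ht
    by_cases htK : t ≤ K
    · rw [indicator_of_mem (mem_Ioc.2 ⟨ht, htK⟩), ← tsub_le_iff_left]
      exact le_iSup₂ (f := fun (E : Set α) (_ : MeasurableSet E) => P E - Q E) _
        (measurableSet_lt measurable_const hg)
    · have hempty : {a | t < g a} = ∅ :=
        eq_empty_of_forall_notMem fun a ha => htK ((le_of_lt ha).trans (hgK a))
      simp [hempty]
  have hlin : ∫⁻ x, ENNReal.ofReal (g x) ∂P ≤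
      ∫⁻ x, ENNReal.ofReal (g x) ∂Q + ENNReal.ofReal K * S := by
    rw [lintegral_eq_lintegral_meas_lt P (ae_of_all _ hg0) hg.aemeasurable,
      lintegral_eq_lintegral_meas_lt Q (ae_of_all _ hg0) hg.aemeasurable]
    calc ∫⁻ t in Ioi 0, P {a | t < g a}
        ≤ ∫⁻ t in Ioi 0, (Q {a | t < g a} + (Ioc 0 K).indicator (fun _ => S) t) :=
          setLIntegral_mono' measurableSet_Ioi hlevel
      _ ≤ (∫⁻ t in Ioi 0, Q {a | t < g a}) +
            ∫⁻ t, (Ioc 0 K).indicator (fun _ => S) t := by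
          rw [lintegral_add_right _ (measurable_const.indicator measurableSet_Ioc)]
          exact add_le_add_right (setLIntegral_le_lintegral _ _) _
      _ = (∫⁻ t in Ioi 0, Q {a | t < g a}) + ENNReal.ofReal K * S := by
          rw [lintegral_indicator_const measurableSet_Ioc, Real.volume_Ioc, sub_zero, mul_comm]
  have hreal := ENNReal.toReal_mono (ENNReal.add_ne_top.2 ⟨hQ, by finiteness⟩) hlin
  rw [ENNReal.toReal_add hQ (by finiteness), ENNReal.toReal_mul,
    ENNReal.toReal_ofReal hK] at hreal
  rw [integral_eq_lintegral_of_nonneg_ae (ae_of_all _ hg0) hg.aestronglyMeasurable,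
    integral_eq_lintegral_of_nonneg_ae (ae_of_all _ hg0) hg.aestronglyMeasurable]
  linarith

lemma abs_integral_sub_integral_le_tvNorm (P Q : Measure α) [IsProbabilityMeasure P]
    [IsProbabilityMeasure Q] {f : α → ℝ} (hf : Measurable f) {B : ℝ} (hB : 0 ≤ B)
    (hfB : ∀ x, |f x| ≤ B) :
    |∫ x, f x ∂P - ∫ x, f x ∂Q| ≤ 2 * B * tvNorm P Q := by
  have hshift : ∀ (ρ : Measure α) [IsProbabilityMeasure ρ],
      ∫ x, (f x + B) ∂ρ = ∫ x, f x ∂ρ + B := fun ρ _ => by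
    rw [integral_add _ (integrable_const B), integral_const, probReal_univ, one_smul]
    exact Integrable.of_bound hf.aestronglyMeasurable B (ae_of_all _ hfB)
  have hg0 : ∀ x, 0 ≤ f x + B := fun x => by linarith [(abs_le.1 (hfB x)).1]
  have hgK : ∀ x, f x + B ≤ 2 * B := fun x => by linarith [(abs_le.1 (hfB x)).2]
  have hPQ := integral_sub_integral_le_of_nonneg_of_le P Q (hf.add_const B) (by linarith) hg0 hgK
  have hQP := integral_sub_integral_le_of_nonneg_of_le Q P (hf.add_const B) (by linarith) hg0 hgK
  rw [hshift P, hshift Q] at hPQ hQP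
  have hSPQ : (0 : ℝ) ≤ (⨆ (E : Set α) (_ : MeasurableSet E), (P E - Q E)).toReal :=
    ENNReal.toReal_nonneg
  have hSQP : (0 : ℝ) ≤ (⨆ (E : Set α) (_ : MeasurableSet E), (Q E - P E)).toReal :=
    ENNReal.toReal_nonneg
  rw [abs_le, tvNorm]
  constructor <;> nlinarith

end TotalVariation

section Growth

variable {E : Type*} [NormedAddCommGroup E] {v : E → ℝ} {C mt m R : ℝ}

lemma nonneg_of_abs_le_mul_one_add_rpow (hv : ∀ y, |v y| ≤ C * (1 + ‖y‖ ^ mt)) : 0 ≤ C :=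
  nonneg_of_mul_nonneg_left ((abs_nonneg _).trans (hv 0)) (by positivity)

lemma Real.rpow_le_rpow_sub_mul_rpow {x : ℝ} (hR : 0 < R) (hRx : R ≤ x) (hm : mt ≤ m) :
    x ^ mt ≤ R ^ (mt - m) * x ^ m := by
  have hx : 0 < x := hR.trans_le hRx
  calc x ^ mt = x ^ (mt - m) * x ^ m := by rw [← Real.rpow_add hx, sub_add_cancel]
    _ ≤ R ^ (mt - m) * x ^ m := mul_le_mul_of_nonneg_right
      (Real.rpow_le_rpow_of_nonpos hR hRx (sub_nonpos.2 hm)) (by positivity)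

lemma abs_indicator_closedBall_le (hv : ∀ y, |v y| ≤ C * (1 + ‖y‖ ^ mt)) (hmt0 : 0 ≤ mt)
    (hR : 0 ≤ R) (y : E) :
    |(Metric.closedBall 0 R).indicator v y| ≤ C * (1 + R ^ mt) := by
  have hC := nonneg_of_abs_le_mul_one_add_rpow hv
  by_cases hy : y ∈ Metric.closedBall 0 R
  · rw [indicator_of_mem hy]
    refine (hv y).trans ?_
    gcongr
    exact mem_closedBall_zero_iff.1 hy
  · rw [indicator_of_notMem hy, abs_zero]
    positivity

lemma abs_indicator_closedBall_compl_le (hv : ∀ y, |v y| ≤ C * (1 + ‖y‖ ^ mt))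
    (hmt0 : 0 ≤ mt) (hmtm : mt ≤ m) (hR : 1 ≤ R) (y : E) :
    |(Metric.closedBall 0 R)ᶜ.indicator v y| ≤ 2 * C * R ^ (mt - m) * ‖y‖ ^ m := by
  have hC := nonneg_of_abs_le_mul_one_add_rpow hv
  by_cases hy : y ∈ (Metric.closedBall 0 R)ᶜ
  · rw [indicator_of_mem hy]
    have hRy : R ≤ ‖y‖ := (not_le.1 fun h => hy (mem_closedBall_zero_iff.2 h)).le
    have h1 : 1 ≤ ‖y‖ ^ mt := Real.one_le_rpow (hR.trans hRy) hmt0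
    calc |v y| ≤ C * (1 + ‖y‖ ^ mt) := hv y
      _ ≤ 2 * C * ‖y‖ ^ mt := by nlinarith
      _ ≤ 2 * C * (R ^ (mt - m) * ‖y‖ ^ m) := by
          gcongr
          exact Real.rpow_le_rpow_sub_mul_rpow (by linarith) hRy hmtm
      _ = 2 * C * R ^ (mt - m) * ‖y‖ ^ m := by ring
  · rw [indicator_of_notMem hy, abs_zero]
    positivity

end Growth

section Truncation

variable {E : Type*} [NormedAddCommGroup E] [MeasurableSpace E] {v : E → ℝ} {C mt m M R : ℝ}

lemma abs_integral_indicator_closedBall_compl_le (P : Measure E)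
    (hv : ∀ y, |v y| ≤ C * (1 + ‖y‖ ^ mt)) (hmt0 : 0 ≤ mt) (hmtm : mt ≤ m) (hR : 1 ≤ R)
    (hint : Integrable (fun y => ‖y‖ ^ m) P) (hmom : ∫ y, ‖y‖ ^ m ∂P ≤ M) :
    |∫ y, (Metric.closedBall 0 R)ᶜ.indicator v y ∂P| ≤ 2 * C * R ^ (mt - m) * M := by
  have hcoef : 0 ≤ 2 * C * R ^ (mt - m) := by
    have := nonneg_of_abs_le_mul_one_add_rpow hv
    positivity
  calc |∫ y, (Metric.closedBall 0 R)ᶜ.indicator v y ∂P|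
      ≤ ∫ y, 2 * C * R ^ (mt - m) * ‖y‖ ^ m ∂P :=
        norm_integral_le_of_norm_le (f := (Metric.closedBall 0 R)ᶜ.indicator v)
          (hint.const_mul _) (ae_of_all _ (abs_indicator_closedBall_compl_le hv hmt0 hmtm hR))
    _ = 2 * C * R ^ (mt - m) * ∫ y, ‖y‖ ^ m ∂P := integral_const_mul _ _
    _ ≤ 2 * C * R ^ (mt - m) * M := mul_le_mul_of_nonneg_left hmom hcoef

lemma abs_integral_sub_integral_le_of_growth [OpensMeasurableSpace E] (P Q : Measure E)
    [IsProbabilityMeasure P] [IsProbabilityMeasure Q] (hvm : Measurable v)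
    (hv : ∀ y, |v y| ≤ C * (1 + ‖y‖ ^ mt)) (hmt0 : 0 ≤ mt) (hmtm : mt ≤ m) (hR : 1 ≤ R)
    (hPint : Integrable (fun y => ‖y‖ ^ m) P) (hPmom : ∫ y, ‖y‖ ^ m ∂P ≤ M)
    (hQint : Integrable (fun y => ‖y‖ ^ m) Q) (hQmom : ∫ y, ‖y‖ ^ m ∂Q ≤ M) :
    |∫ y, v y ∂P - ∫ y, v y ∂Q| ≤
      2 * (C * (1 + R ^ mt)) * tvNorm P Q + 4 * C * R ^ (mt - m) * M := by
  set s := Metric.closedBall (0 : E) R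
  have hs : MeasurableSet s := Metric.isClosed_closedBall.measurableSet
  have hB : 0 ≤ C * (1 + R ^ mt) := by
    have := nonneg_of_abs_le_mul_one_add_rpow hv
    have : 0 ≤ R := by linarith
    positivity
  have hsplit : ∀ (ρ : Measure E) [IsFiniteMeasure ρ], Integrable (fun y => ‖y‖ ^ m) ρ →
      ∫ y, v y ∂ρ = ∫ y, s.indicator v y ∂ρ + ∫ y, sᶜ.indicator v y ∂ρ := by
    intro ρ _ hρ
    rw [← integral_add]
    · simp only [indicator_self_add_compl_apply]
    · exact Integrable.of_bound (hvm.indicator hs).aestronglyMeasurable _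
        (ae_of_all _ (abs_indicator_closedBall_le hv hmt0 (by linarith)))
    · exact (hρ.const_mul _).mono' (hvm.indicator hs.compl).aestronglyMeasurable
        (ae_of_all _ (abs_indicator_closedBall_compl_le hv hmt0 hmtm hR))
  have hball := abs_integral_sub_integral_le_tvNorm P Q (hvm.indicator hs) hB
    (abs_indicator_closedBall_le hv hmt0 (by linarith))
  have hPtail := abs_integral_indicator_closedBall_compl_le P hv hmt0 hmtm hR hPint hPmom
  have hQtail := abs_integral_indicator_closedBall_compl_le Q hv hmt0 hmtm hR hQint hQmom
  rw [hsplit P hPint, hsplit Q hQint]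
  calc _ ≤ |∫ y, s.indicator v y ∂P - ∫ y, s.indicator v y ∂Q|
        + (|∫ y, sᶜ.indicator v y ∂P| + |∫ y, sᶜ.indicator v y ∂Q|) := by
        rw [add_sub_add_comm]
        exact (abs_add_le _ _).trans (add_le_add_right (abs_sub _ _) _)
    _ ≤ _ := by linarith

end Truncation

section Moments

variable {α : Type*} [MeasurableSpace α] {μ : Measure α} {f : α → ℝ} {M : ℝ}

lemma integrable_of_lintegral_ofReal_le (hf : AEStronglyMeasurable f μ) (hf0 : 0 ≤ᵐ[μ] f)
    (h : ∫⁻ x, ENNReal.ofReal (f x) ∂μ ≤ ENNReal.ofReal M) : Integrable f μ :=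
  ⟨hf, (hasFiniteIntegral_iff_ofReal hf0).2 (h.trans_lt ENNReal.ofReal_lt_top)⟩

lemma integral_le_max_of_lintegral_ofReal_le (hf : AEStronglyMeasurable f μ)
    (hf0 : 0 ≤ᵐ[μ] f) (h : ∫⁻ x, ENNReal.ofReal (f x) ∂μ ≤ ENNReal.ofReal M) :
    ∫ x, f x ∂μ ≤ max M 0 := by
  rw [integral_eq_lintegral_of_nonneg_ae hf0 hf, ← ENNReal.toReal_ofReal']
  exact ENNReal.toReal_mono ENNReal.ofReal_ne_top h

end Moments

lemma tendsto_zero_of_abs_le_mul_add {ι κ : Type*} {l : Filter ι} {L : Filter κ} [L.NeBot]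
    {a t : ι → ℝ} {b c : κ → ℝ} (ht : Tendsto t l (nhds 0)) (hc : Tendsto c L (nhds 0))
    (hbound : ∀ᶠ r in L, ∀ i, |a i| ≤ b r * t i + c r) : Tendsto a l (nhds 0) := by
  rw [Metric.tendsto_nhds]
  intro ε hε
  obtain ⟨r, hcr, hr⟩ :=
    ((hc.eventually (gt_mem_nhds (half_pos hε))).and hbound).exists
  have hbt : Tendsto (fun i => b r * t i) l (nhds 0) := by
    simpa using ht.const_mul (b r)
  filter_upwards [hbt.eventually (gt_mem_nhds (half_pos hε))] with i hi
  rw [Real.dist_eq, sub_zero]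
  linarith [hr i]

theorem stmt12_general
    (d : ℕ)
    (μ : Measure (EuclideanSpace ℝ (Fin d)))
    (ν : ℕ → Measure (EuclideanSpace ℝ (Fin d)))
    (hμ : IsProbabilityMeasure μ) (hν : ∀ n, IsProbabilityMeasure (ν n))
    (m mt M : ℝ) (hmt0 : 0 ≤ mt) (hmtm : mt < m)
    (hνm : ∀ n, ∫⁻ y, ENNReal.ofReal (‖y‖ ^ m) ∂(ν n) ≤ ENNReal.ofReal M)
    (hμm : ∫⁻ y, ENNReal.ofReal (‖y‖ ^ m) ∂μ ≤ ENNReal.ofReal M)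
    (htv : Tendsto (fun n => tvNorm (ν n) μ) atTop (nhds 0)) :
    ∀ (v : EuclideanSpace ℝ (Fin d) → ℝ) (C : ℝ), Measurable v →
      (∀ y, |v y| ≤ C * (1 + ‖y‖ ^ mt)) →
      Tendsto (fun n => ∫ y, v y ∂(ν n)) atTop (nhds (∫ y, v y ∂μ)) := by
  intro v C hv hvC
  have hmoment : ∀ ρ : Measure (EuclideanSpace ℝ (Fin d)),
      ∫⁻ y, ENNReal.ofReal (‖y‖ ^ m) ∂ρ ≤ ENNReal.ofReal M →
      Integrable (fun y => ‖y‖ ^ m) ρ ∧ ∫ y, ‖y‖ ^ m ∂ρ ≤ max M 0 := by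
    intro ρ hρ
    have hmeas := (measurable_norm.pow_const m).aestronglyMeasurable (μ := ρ)
    have hnonneg : 0 ≤ᵐ[ρ] fun y : EuclideanSpace ℝ (Fin d) => ‖y‖ ^ m :=
      ae_of_all _ fun y => by positivity
    exact ⟨integrable_of_lintegral_ofReal_le hmeas hnonneg hρ,
      integral_le_max_of_lintegral_ofReal_le hmeas hnonneg hρ⟩
  have htail : Tendsto (fun R : ℝ => 4 * C * R ^ (mt - m) * max M 0) atTop (nhds 0) := by
    have := ((tendsto_rpow_neg_atTop (sub_pos.2 hmtm)).const_mul (4 * C)).mul_const (max M 0)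
    simpa only [neg_sub, mul_zero, zero_mul] using this
  rw [← tendsto_sub_nhds_zero_iff]
  refine tendsto_zero_of_abs_le_mul_add (b := fun R => 2 * (C * (1 + R ^ mt))) htv htail ?_
  filter_upwards [eventually_ge_atTop 1] with R hR n
  obtain ⟨hνint, hνmom⟩ := hmoment (ν n) (hνm n)
  obtain ⟨hμint, hμmom⟩ := hmoment μ hμm
  exact abs_integral_sub_integral_le_of_growth (ν n) μ hv hvC hmt0 hmtm.le hR
    hνint hνmom hμint hμmom

/-- if `ν_n` and `μ` are probability measures with uniformly bounded
`m`-th moments and `‖ν_n − μ‖ → 0`, then `∫ v dν_n → ∫ v dμ` for every Borel `v`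
with `|v(y)| ≤ C (1+|y|^m̃)`, `0 ≤ m̃ < m`. -/
theorem stmt12
    (d : ℕ) (hd : 1 ≤ d)
    (μ : Measure (EuclideanSpace ℝ (Fin d)))
    (ν : ℕ → Measure (EuclideanSpace ℝ (Fin d)))
    (hμ : IsProbabilityMeasure μ) (hν : ∀ n, IsProbabilityMeasure (ν n))
    (m mt M : ℝ) (hmt0 : 0 ≤ mt) (hmtm : mt < m)
    (hνm : ∀ n, ∫⁻ y, ENNReal.ofReal (‖y‖ ^ m) ∂(ν n) ≤ ENNReal.ofReal M)
    (hμm : ∫⁻ y, ENNReal.ofReal (‖y‖ ^ m) ∂μ ≤ ENNReal.ofReal M)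
    (htv : Tendsto (fun n => tvNorm (ν n) μ) atTop (nhds 0)) :
    ∀ (v : EuclideanSpace ℝ (Fin d) → ℝ) (C : ℝ), Measurable v →
      (∀ y, |v y| ≤ C * (1 + ‖y‖ ^ mt)) →
      Tendsto (fun n => ∫ y, v y ∂(ν n)) atTop (nhds (∫ y, v y ∂μ)) :=
  stmt12_general d μ ν hμ hν m mt M hmt0 hmtm hνm hμm htv
end
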